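/- arXiv:1701.05508 — 7 statements merged into one kernel-verified Lean document; each statement's English description precedes it below -/
import Mathlib

section
/- Let (K,v) be a henselian valued field of residue characteristic p > 0 containing all p-th roots of unity, and let b, c ∈ K with v(b) > 0 and v(c) > p/(p-1)·v(p). Then 1 + b and 1 + b + c differ multiplicatively by a p-th power in K, i.e., 1 + b ∈ (1 + b + c)·(K^×)^p. -/
/-!
Let `ζ` be a primitive `p`-th root of unity and `η = 1 - ζ`. Evaluating `Φ_p = ∏ (X - ζ^i)` at `1`
gives `p = ∏ (1 - ζ^i)`, and all factors have the valuation of `η`, so `w(η)^(p-1) = w(p)`.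
Write `1 + b = (1 + b + c)(1 + d)` with `d = -c / (1 + b + c)`; then `w(d) = w(c) < w(η)^p`.
The substitution `y = 1 + η x` turns `y^p = 1 + d` into the monic equation
`((1 + η x)^p - 1 - d) / η^p = 0`, whose coefficients are integral because `p ∣ (p choose i)`,
whose constant term `-d / η^p` lies in the maximal ideal, and whose linear coefficient
`p η / η^p` is a unit; Hensel's lemma solves it.
-/
open Polynomial

theorem exists_isPrimitiveRoot_of_splits_X_pow_sub_one {K : Type*} [Field K] {n : ℕ}
    [NeZero (n : K)] (h : (X ^ n - 1 : K[X]).Splits) : ∃ ζ : K, IsPrimitiveRoot ζ n := by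
  have hn : 0 < n := NeZero.pos_of_neZero_natCast K
  have hsplit : (cyclotomic n K).Splits :=
    h.of_dvd (X_pow_sub_C_ne_zero hn 1) (cyclotomic.dvd_X_pow_sub_one n K)
  obtain ⟨ζ, hζ⟩ := hsplit.exists_eval_eq_zero (degree_cyclotomic_pos n K hn).ne'
  exact ⟨ζ, isRoot_cyclotomic_iff.mp hζ⟩

section KummerPoly

variable {K : Type*} [Field K]

noncomputable def kummerPoly (p : ℕ) (η d : K) : K[X] :=
  C (η ^ p)⁻¹ * ((X + 1) ^ p - C (1 + d)).comp (C η * X)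

variable {p : ℕ} {η d : K}

theorem eval_kummerPoly (x : K) :
    (kummerPoly p η d).eval x = (η ^ p)⁻¹ * ((η * x + 1) ^ p - (1 + d)) := by
  simp [kummerPoly]

theorem coeff_kummerPoly (i : ℕ) :
    (kummerPoly p η d).coeff i =
      (η ^ p)⁻¹ * ((p.choose i - if i = 0 then 1 + d else 0) * η ^ i) := by
  rw [kummerPoly, coeff_C_mul, comp_C_mul_X_coeff, coeff_sub, coeff_X_add_one_pow, coeff_C]

theorem coeff_kummerPoly_zero (hη : η ≠ 0) : (kummerPoly p η d).coeff 0 = -d / η ^ p := by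
  rw [coeff_kummerPoly]; field_simp; simp

theorem coeff_kummerPoly_of_pos {i : ℕ} (hi : 0 < i) :
    (kummerPoly p η d).coeff i = p.choose i * η ^ i / η ^ p := by
  rw [coeff_kummerPoly, if_neg hi.ne', sub_zero, inv_mul_eq_div]

theorem kummerPoly_monic (hp : p ≠ 0) (hη : η ≠ 0) : (kummerPoly p η d).Monic := by
  refine monic_of_natDegree_le_of_coeff_eq_one p ?_ ?_
  · refine natDegree_le_iff_coeff_eq_zero.mpr fun i hi => ?_
    rw [coeff_kummerPoly_of_pos (by omega), Nat.choose_eq_zero_of_lt (by exact_mod_cast hi)]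
    simp
  · rw [coeff_kummerPoly_of_pos (Nat.pos_of_ne_zero hp), Nat.choose_self, Nat.cast_one, one_mul,
      div_self (pow_ne_zero p hη)]

end KummerPoly

namespace Valuation

variable {K : Type*} [Field K] {Γ : Type*} [LinearOrderedCommGroupWithZero Γ] (w : Valuation K Γ)

theorem map_natCast_le_one (n : ℕ) : w n ≤ 1 :=
  (w.mem_valuationSubring_iff _).mp (natCast_mem w.valuationSubring n)

theorem map_eq_one_of_pow_eq_one {x : K} {n : ℕ} (hn : n ≠ 0) (hx : x ^ n = 1) : w x = 1 :=
  (pow_eq_one_iff_left hn).mp (by rw [← map_pow, hx, map_one])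

theorem map_one_sub_le_of_isPrimitiveRoot {ζ μ : K} {n : ℕ} [NeZero n]
    (hζ : IsPrimitiveRoot ζ n) (hμ : μ ^ n = 1) : w (1 - μ) ≤ w (1 - ζ) := by
  obtain ⟨i, -, rfl⟩ := hζ.eq_pow_of_pow_eq_one hμ
  have hζ1 : w ζ = 1 := w.map_eq_one_of_pow_eq_one (NeZero.ne n) hζ.pow_eq_one
  have hsum : w (∑ k ∈ Finset.range i, ζ ^ k) ≤ 1 :=
    w.map_sum_le fun k _ => by rw [map_pow, hζ1, one_pow]
  calc w (1 - ζ ^ i) = w (1 - ζ) * w (∑ k ∈ Finset.range i, ζ ^ k) := by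
        rw [← mul_neg_geom_sum, map_mul]
    _ ≤ w (1 - ζ) := mul_le_of_le_one_right' hsum

theorem map_one_sub_eq_of_isPrimitiveRoot {ζ μ : K} {n : ℕ} [NeZero n]
    (hζ : IsPrimitiveRoot ζ n) (hμ : IsPrimitiveRoot μ n) : w (1 - μ) = w (1 - ζ) :=
  le_antisymm (w.map_one_sub_le_of_isPrimitiveRoot hζ hμ.pow_eq_one)
    (w.map_one_sub_le_of_isPrimitiveRoot hμ hζ.pow_eq_one)

theorem map_one_sub_pow_of_isPrimitiveRoot {ζ : K} {p : ℕ} [hp : Fact p.Prime]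
    (hζ : IsPrimitiveRoot ζ p) : w (1 - ζ) ^ (p - 1) = w p := by
  have hprod : (p : K) = ∏ μ ∈ primitiveRoots p K, (1 - μ) := by
    rw [← eval_one_cyclotomic_prime (R := K), cyclotomic_eq_prod_X_sub_primitiveRoots hζ,
      eval_prod]
    simp only [eval_sub, eval_X, eval_C]
  rw [hprod, map_prod, Finset.prod_congr rfl fun μ hμ => w.map_one_sub_eq_of_isPrimitiveRoot hζ
    ((mem_primitiveRoots hp.out.pos).mp hμ), Finset.prod_const, hζ.card_primitiveRoots,
    Nat.totient_prime hp.out]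

theorem map_choose_mul_pow_le {p : ℕ} (hp : p.Prime) {η : K} (hη : w η ^ (p - 1) = w p)
    (hη1 : w η ≤ 1) {i : ℕ} (hi : 0 < i) : w (p.choose i * η ^ i) ≤ w η ^ p := by
  rcases lt_trichotomy i p with hip | rfl | hpi
  · obtain ⟨m, hm⟩ := hp.dvd_choose_self hi.ne' hip
    calc w (p.choose i * η ^ i) = w p * w m * w η ^ i := by
          rw [hm, Nat.cast_mul, map_mul, map_mul, map_pow]
      _ ≤ w η ^ (p - 1) * w η ^ i := by
          rw [hη]; exact mul_le_mul_left (mul_le_of_le_one_right' (w.map_natCast_le_one m)) _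
      _ = w η ^ p * w η ^ (i - 1) := by rw [← pow_add, ← pow_add]; congr 1; omega
      _ ≤ w η ^ p := mul_le_of_le_one_right' (pow_le_one₀ zero_le hη1)
  · simp
  · simp [Nat.choose_eq_zero_of_lt hpi]

theorem exists_isRoot_of_henselian [HenselianLocalRing w.valuationSubring] {f : K[X]}
    (hf : f.Monic) (hcoeff : ∀ i, w (f.coeff i) ≤ 1) (h0 : w (f.coeff 0) < 1)
    (h1 : w (f.coeff 1) = 1) : ∃ x : K, f.IsRoot x := by
  have hint : w.Integers w.valuationSubring := integer.integers w
  have hlift : f ∈ lifts (algebraMap w.valuationSubring K) :=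
    (lifts_iff_coeff_lifts f).mpr fun i => hint.exists_of_le_one (hcoeff i)
  obtain ⟨F, rfl, -, hF⟩ := lifts_and_degree_eq_and_monic hlift hf
  have hF0 : F.eval 0 ∈ IsLocalRing.maximalIdeal w.valuationSubring := by
    rw [IsLocalRing.mem_maximalIdeal, mem_nonunits_iff, hint.isUnit_iff_valuation_eq_one,
      ← coeff_zero_eq_eval_zero, ← coeff_map]
    exact h0.ne
  have hF1 : IsUnit (F.derivative.eval 0) := by
    rw [hint.isUnit_iff_valuation_eq_one, ← coeff_zero_eq_eval_zero, coeff_derivative]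
    simpa [coeff_map] using h1
  obtain ⟨a, ha, -⟩ := HenselianLocalRing.is_henselian F hF 0 hF0 hF1
  refine ⟨algebraMap _ K a, ?_⟩
  rw [IsRoot, eval_map_algebraMap, aeval_algebraMap_apply, coe_aeval_eq_eval, ha.eq_zero, map_zero]

theorem exists_pow_eq_one_add [HenselianLocalRing w.valuationSubring] {p : ℕ} (hp : p.Prime)
    {η d : K} (hη : w η ^ (p - 1) = w p) (hd : w d < w η ^ p) : ∃ y : K, y ^ p = 1 + d := by
  have hηp : 0 < w η ^ p := lt_of_le_of_lt zero_le hd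
  have hη0 : η ≠ 0 := by
    rintro rfl
    simp [zero_pow hp.ne_zero] at hηp
  have hη1 : w η ≤ 1 := by
    by_contra! h
    have := one_lt_pow' h (Nat.sub_ne_zero_of_lt hp.one_lt)
    exact (w.map_natCast_le_one p).not_gt (hη ▸ this)
  have hcoeff0 : w ((kummerPoly p η d).coeff 0) < 1 := by
    rw [coeff_kummerPoly_zero hη0, map_div₀, w.map_neg, map_pow]
    exact (div_lt_one₀ hηp).mpr hd
  have hcoeff : ∀ i, w ((kummerPoly p η d).coeff i) ≤ 1 := by
    intro i
    rcases i.eq_zero_or_pos with rfl | hi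
    · exact hcoeff0.le
    · rw [coeff_kummerPoly_of_pos hi, map_div₀, map_pow]
      exact (div_le_one₀ hηp).mpr (w.map_choose_mul_pow_le hp hη hη1 hi)
  have hcoeff1 : w ((kummerPoly p η d).coeff 1) = 1 := by
    rw [coeff_kummerPoly_of_pos one_pos, Nat.choose_one_right, pow_one, map_div₀, map_mul,
      map_pow, ← hη, ← pow_succ, Nat.sub_add_cancel hp.one_le, div_self hηp.ne']
  obtain ⟨x, hx⟩ :=
    w.exists_isRoot_of_henselian (kummerPoly_monic hp.ne_zero hη0) hcoeff hcoeff0 hcoeff1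
  rw [IsRoot, eval_kummerPoly, mul_eq_zero, inv_eq_zero, or_iff_right (pow_ne_zero _ hη0),
    sub_eq_zero] at hx
  exact ⟨η * x + 1, hx⟩

end Valuation

theorem stmt0_general {K : Type*} [Field K] {Γ : Type*} [LinearOrderedCommGroupWithZero Γ]
    (w : Valuation K Γ)
    (hhens : HenselianLocalRing w.valuationSubring)
    (p : ℕ) (hp : p.Prime)
    (hroots : (Polynomial.X ^ p - 1 : Polynomial K).Splits)
    (b c : K) (hb : w b < 1) (hc : w c ^ (p - 1) < w (p : K) ^ p) :
    ∃ u : Kˣ, 1 + b = (1 + b + c) * (u : K) ^ p := by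
  have : Fact p.Prime := ⟨hp⟩
  have : NeZero (p : K) := ⟨fun h => by simp [h, zero_pow hp.ne_zero] at hc⟩
  obtain ⟨ζ, hζ⟩ := exists_isPrimitiveRoot_of_splits_X_pow_sub_one hroots
  have hη : w (1 - ζ) ^ (p - 1) = w p := w.map_one_sub_pow_of_isPrimitiveRoot hζ
  have hc1 : w c < 1 := lt_of_pow_lt_pow_left' (p - 1) <| by
    rw [one_pow]; exact hc.trans_le (pow_le_one₀ zero_le (w.map_natCast_le_one p))
  have hB : w (1 + b + c) = 1 := by
    rw [add_assoc]; exact w.map_one_add_of_lt (w.map_add_lt hb hc1)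
  have hd : w (-c / (1 + b + c)) < w (1 - ζ) ^ p := by
    rw [map_div₀, w.map_neg, hB, div_one]
    refine lt_of_pow_lt_pow_left' (p - 1) ?_
    rwa [← pow_mul, mul_comm, pow_mul, hη]
  obtain ⟨y, hy⟩ := w.exists_pow_eq_one_add hp hη hd
  have hkey : 1 + b = (1 + b + c) * y ^ p := by
    have hB0 : 1 + b + c ≠ 0 := by simp [← w.ne_zero_iff, hB]
    rw [hy]; field_simp; ring
  have hy0 : y ≠ 0 := by
    rintro rfl
    have h1b := w.map_one_add_of_lt hb
    rw [hkey, zero_pow hp.ne_zero, mul_zero, map_zero] at h1b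
    exact zero_ne_one h1b
  exact ⟨Units.mk0 y hy0, hkey⟩

/-- Let (K,v) be a henselian valued field of residue characteristic p > 0
containing all p-th roots of unity, and let b, c ∈ K with v(b) > 0 and
v(c) > p/(p-1)·v(p) (multiplicatively: w c ^ (p-1) < w p ^ p). Then
1 + b ∈ (1 + b + c)·(K^×)^p.  (Valuations are written multiplicatively:
additive v(a) > 0 corresponds to w a < 1, and additive v(a) > v(b) to w a < w b.) -/
theorem stmt0 {K : Type*} [Field K] {Γ : Type*} [LinearOrderedCommGroupWithZero Γ]
    (w : Valuation K Γ)
    (hhens : HenselianLocalRing w.valuationSubring)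
    (p : ℕ) (hp : p.Prime)
    (hresp : w (p : K) < 1)  -- the residue characteristic is p
    (hroots : (Polynomial.X ^ p - 1 : Polynomial K).Splits)
    (b c : K) (hb : w b < 1) (hc : w c ^ (p - 1) < w (p : K) ^ p) :
    ∃ u : Kˣ, 1 + b = (1 + b + c) * (u : K) ^ p :=
  stmt0_general w hhens p hp hroots b c hb hc
end

section
/- Let (K,v) be a henselian valued field and let (F|K,v) be a valued function field which is a separable subextension of the completion K^c of (K,v). Then for every separating transcendence basis T of F|K, F is contained in the henselization of (K(T),v) taken inside K^c. -/
/-- A subfield of a valued field is henselian if its valuation ring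
(for the restricted valuation) is a henselian local ring. -/
def Subfield.IsHenselian {Ω Γ : Type*} [Field Ω] [LinearOrderedCommGroupWithZero Γ]
    (w : Valuation Ω Γ) (K : Subfield Ω) : Prop :=
  HenselianLocalRing (w.comap K.subtype).valuationSubring

/-- The henselization of a subfield K of an algebraically closed valued field (Ω,w). -/
noncomputable def henselization {Ω Γ : Type*} [Field Ω] [LinearOrderedCommGroupWithZero Γ]
    (w : Valuation Ω Γ) (K : Subfield Ω) : Subfield Ω :=
  sInf {L : Subfield Ω | K ≤ L ∧ Subfield.IsHenselian w L}

/-- x is separable algebraic over the subfield M. -/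
def SepAlgOver {Ω : Type*} [Field Ω] (M : Subfield Ω) (x : Ω) : Prop :=
  ∃ f : Polynomial Ω, f ≠ 0 ∧ (∀ i, f.coeff i ∈ M) ∧ f.Separable ∧ Polynomial.eval x f = 0

/-- The set T is algebraically independent over the subfield M. -/
def AlgIndepOver {Ω : Type*} [Field Ω] (M : Subfield Ω) (T : Set Ω) : Prop :=
  ∀ (n : ℕ) (t : Fin n → Ω) (f : MvPolynomial (Fin n) Ω),
    (∀ i, t i ∈ T) → Function.Injective t → (∀ m, MvPolynomial.coeff m f ∈ M) →
    MvPolynomial.eval t f = 0 → f = 0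

/-- T is a separating transcendence basis of L over K: T ⊆ L, T algebraically
independent over K, and L separable algebraic over K(T). -/
def IsSepTranscBasis {Ω : Type*} [Field Ω] (K L : Subfield Ω) (T : Set Ω) : Prop :=
  T ⊆ (L : Set Ω) ∧ AlgIndepOver K T ∧
    ∀ x ∈ L, SepAlgOver (Subfield.closure ((K : Set Ω) ∪ T)) x

/-! A henselian field is separable-algebraically closed in its completion. Let `x` be a root of a
separable polynomial `f` over a henselian `L`, and let `y, y' ∈ L` with
`w (x - y') < w (x - y) < w (x - r)` for the other roots `r` of `f`. Substituting
`X ↦ y + (y' - y) / X` into `f` gives, up to a constant in `L`, a monic polynomial over `L` with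
integral roots `(y' - y) / (r - y)`, of which `θ = (y' - y) / (x - y)` is the only one congruent
to `1`; Hensel's lemma puts `θ`, hence `x = y + (y' - y) / θ`, into `L`. A henselian subfield
containing `K(T)` contains `K`, so it approximates `F`, and `F` is separable over it; hence `F`
lies in the henselization. -/

open Polynomial

theorem Multiset.exists_ne_zero_le_of_zero_notMem {Γ : Type*} [LinearOrderedCommGroupWithZero Γ]
    {t : Multiset Γ} (ht : 0 ∉ t) : ∃ γ ≠ 0, ∀ δ ∈ t, γ ≤ δ := by
  induction t using Multiset.induction_on with
  | empty => exact ⟨1, one_ne_zero, by simp⟩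
  | cons δ t ih =>
    obtain ⟨γ, hγ0, hγ⟩ := ih fun h => ht (Multiset.mem_cons_of_mem h)
    refine ⟨min δ γ, ?_, ?_⟩
    · rcases min_choice δ γ with h | h <;> rw [h]
      exacts [fun h0 => ht (h0 ▸ Multiset.mem_cons_self δ t), hγ0]
    · simpa using fun ε hε => min_le_of_right_le (hγ ε hε)

namespace Polynomial

theorem derivative_mem_lifts {R S : Type*} [Semiring R] [Semiring S] {f : R →+* S}
    {p : S[X]} (hp : p ∈ lifts f) : derivative p ∈ lifts f := by
  obtain ⟨P, rfl⟩ := (mem_lifts p).mp hp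
  exact ⟨derivative P, (derivative_map P f).symm⟩

theorem reverse_multiset_prod {R : Type*} [CommSemiring R] [NoZeroDivisors R] (s : Multiset R[X]) :
    s.prod.reverse = (s.map reverse).prod := by
  induction s using Multiset.induction_on with
  | empty => simpa using reverse_C (1 : R)
  | cons p s ih => rw [Multiset.prod_cons, reverse_mul_of_domain, ih, Multiset.map_cons,
      Multiset.prod_cons]

variable {K : Type*} [Field K]

theorem reverse_X_sub_C_comp {r y d : K} (hd : d ≠ 0) (hy : y - r ≠ 0) :
    ((X - C r).comp (C y + C d * X)).reverse = C (y - r) * (X - C (d / (r - y))) := by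
  have hlin : (X - C r).comp (C y + C d * X) = C d * X + C (y - r) := by
    simp only [sub_comp, X_comp, C_comp, C_sub]
    ring
  have hcoeff : (y - r) * (d / (r - y)) = -d := by
    rw [← neg_sub r y, neg_mul, mul_div_cancel₀ d (neg_ne_zero.mp (neg_sub r y ▸ hy))]
  rw [hlin, reverse_add_C, reverse_mul_X, reverse_C, natDegree_C_mul_X d hd, pow_one, mul_sub,
    ← C_mul, hcoeff, C_neg]
  ring

theorem Splits.reverse_comp_C_add_C_mul_X {f : K[X]} (hf : f.Splits) {y d : K} (hd : d ≠ 0)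
    (hy : f.eval y ≠ 0) :
    (f.comp (C y + C d * X)).reverse =
      C (f.eval y) * (f.roots.map fun r => X - C (d / (r - y))).prod := by
  have hyr : ∀ r ∈ f.roots, y - r ≠ 0 := fun r hr h =>
    hy (sub_eq_zero.mp h ▸ (isRoot_of_mem_roots hr).eq_zero)
  have hfactors : f.roots.map ((reverse ∘ fun p => p.comp (C y + C d * X)) ∘ fun r => X - C r) =
      f.roots.map fun r => C (y - r) * (X - C (d / (r - y))) :=
    Multiset.map_congr rfl fun r hr => reverse_X_sub_C_comp hd (hyr r hr)
  conv_lhs => rw [hf.eq_prod_roots]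
  rw [hf.eval_eq_prod_roots, mul_comp, C_comp, multiset_prod_comp, reverse_mul_of_domain,
    reverse_C, reverse_multiset_prod, Multiset.map_map, Multiset.map_map,
    hfactors, Multiset.prod_map_mul, C_mul, mul_assoc, map_multiset_prod C, Multiset.map_map]
  rfl

theorem Splits.coeff_prod_X_sub_C_div_sub_mem {L : Subfield K} {f : K[X]} (hf : f.Splits)
    (hfL : ∀ i, f.coeff i ∈ L) {y d : K} (hy : y ∈ L) (hd : d ∈ L) (hd0 : d ≠ 0)
    (hfy : f.eval y ≠ 0) (i : ℕ) :
    ((f.roots.map fun r => X - C (d / (r - y))).prod).coeff i ∈ L := by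
  obtain ⟨F, hF⟩ := (mem_lifts f).mp
    ((lifts_iff_coeff_lifts (f := L.subtype) f).2 fun i => ⟨⟨_, hfL i⟩, rfl⟩)
  have hcomp : f.comp (C y + C d * X) =
      (F.comp (C ⟨y, hy⟩ + C ⟨d, hd⟩ * X)).map L.subtype := by
    simp [← hF, Polynomial.map_comp]
  have hfyL : f.eval y ∈ L := by
    rw [← hF, show y = L.subtype ⟨y, hy⟩ from rfl, eval_map_apply]
    exact SetLike.coe_mem _
  have hprod : (f.roots.map fun r => X - C (d / (r - y))).prod =
      C (f.eval y)⁻¹ * (f.comp (C y + C d * X)).reverse := by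
    rw [hf.reverse_comp_C_add_C_mul_X hd0 hfy, ← mul_assoc, ← C_mul, inv_mul_cancel₀ hfy, C_1,
      one_mul]
  rw [hprod, coeff_C_mul, coeff_reverse, hcomp, coeff_map]
  exact L.mul_mem (L.inv_mem hfyL) (SetLike.coe_mem _)

end Polynomial

namespace Valuation

variable {K Γ : Type*} [Field K] [LinearOrderedCommGroupWithZero Γ] (v : Valuation K Γ)

theorem prod_X_sub_C_mem_lifts {s : Multiset K} (hs : ∀ r ∈ s, v r ≤ 1) :
    (s.map fun r => X - C r).prod ∈ lifts v.valuationSubring.subtype := by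
  refine Subsemiring.multiset_prod_mem _ _ fun p hp => ?_
  obtain ⟨r, hr, rfl⟩ := Multiset.mem_map.mp hp
  exact ⟨X - C ⟨r, hs r hr⟩, by simp⟩

theorem map_coeff_le_one_of_mem_lifts {p : K[X]} (hp : p ∈ lifts v.valuationSubring.subtype)
    (i : ℕ) : v (p.coeff i) ≤ 1 := by
  obtain ⟨c, hc⟩ := (lifts_iff_coeff_lifts p).mp hp i
  rw [← hc]
  exact c.2

theorem map_eval_sub_eval_le {p : K[X]} (hp : p ∈ lifts v.valuationSubring.subtype)
    {a b : K} (ha : v a ≤ 1) (hb : v b ≤ 1) : v (p.eval a - p.eval b) ≤ v (a - b) := by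
  obtain ⟨P, rfl⟩ := (mem_lifts p).mp hp
  obtain ⟨c, hc⟩ := sub_dvd_eval_sub (⟨a, ha⟩ : v.valuationSubring) ⟨b, hb⟩ P
  have hc' : (P.map v.valuationSubring.subtype).eval a - (P.map v.valuationSubring.subtype).eval b
      = (a - b) * c := by
    have := congrArg v.valuationSubring.subtype hc
    rwa [_root_.map_sub, _root_.map_mul, _root_.map_sub, ← eval_map_apply, ← eval_map_apply]
      at this
  rw [hc', v.map_mul]
  exact mul_le_of_le_one_right' c.2

theorem exists_mem_forall_map_sub_lt {L : Set K} {x : K}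
    (happrox : ∀ γ : Γ, γ ≠ 0 → ∃ y ∈ L, v (x - y) < γ) {s : Multiset K}
    (hxs : x ∉ s) :
    ∃ y ∈ L, ∀ r ∈ s, v (x - y) < v (x - r) := by
  obtain ⟨γ, hγ0, hγ⟩ := Multiset.exists_ne_zero_le_of_zero_notMem
    (t := s.map fun r => v (x - r)) (by simpa [sub_eq_zero] using fun h => hxs h)
  obtain ⟨y, hyL, hxy⟩ := happrox γ hγ0
  exact ⟨y, hyL, fun r hr => hxy.trans_le (hγ _ (Multiset.mem_map_of_mem _ hr))⟩

theorem map_div_sub_lt_one {x y d r : K} (hd : v d = v (x - y)) (h : v (x - y) < v (x - r)) :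
    v (d / (r - y)) < 1 := by
  have hry : v (r - y) = v (x - r) := by
    rw [show r - y = (x - y) - (x - r) by ring, v.map_sub_eq_of_lt_right h]
  rw [map_div₀, hd, hry, div_lt_one₀ (zero_le.trans_lt h)]
  exact h

end Valuation

namespace Subfield.IsHenselian

variable {Ω Γ : Type*} [Field Ω] [LinearOrderedCommGroupWithZero Γ] {w : Valuation Ω Γ}
  {L : Subfield Ω}

theorem exists_isRoot_sub_lt_one (hL : L.IsHenselian w) {p : Polynomial Ω} (hp : p.Monic)
    (hpL : ∀ i, p.coeff i ∈ L) (hpw : ∀ i, w (p.coeff i) ≤ 1) {a : Ω} (ha : a ∈ L)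
    (haw : w a ≤ 1) (hpa : w (p.eval a) < 1) (hp'a : w (p.derivative.eval a) = 1) :
    ∃ b ∈ L, p.IsRoot b ∧ w (b - a) < 1 := by
  set v := w.comap L.subtype
  set φ : v.valuationSubring →+* Ω := L.subtype.comp v.valuationSubring.subtype
  have hR : v.Integers v.valuationSubring := Valuation.valuationSubring.integers v
  have hmax (c : v.valuationSubring) :
      c ∈ IsLocalRing.maximalIdeal v.valuationSubring ↔ w (φ c) < 1 := by
    rw [IsLocalRing.mem_maximalIdeal, mem_nonunits_iff, hR.isUnit_iff_valuation_eq_one]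
    exact ⟨fun h => lt_of_le_of_ne c.2 h, ne_of_lt⟩
  obtain ⟨P, rfl, -, hPm⟩ := lifts_and_natDegree_eq_and_monic
    ((lifts_iff_coeff_lifts (f := φ) p).2 fun i => ⟨⟨⟨_, hpL i⟩, hpw i⟩, rfl⟩) hp
  set a₀ : v.valuationSubring := ⟨⟨a, ha⟩, haw⟩
  have hR' : HenselianLocalRing v.valuationSubring := hL
  obtain ⟨b, hb, hba⟩ := hR'.is_henselian P hPm a₀ ((hmax _).2 (by rwa [← eval_map_apply]))
    (by
      rw [hR.isUnit_iff_valuation_eq_one]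
      change w (φ _) = 1
      rwa [← eval_map_apply, ← derivative_map])
  refine ⟨φ b, b.1.2, ?_, ?_⟩
  · rw [IsRoot, eval_map_apply, hb.eq_zero, map_zero]
  · have := (hmax _).1 hba
    rwa [map_sub] at this

theorem mem_of_residually_simple_root (hL : L.IsHenselian w) [DecidableEq Ω] {s : Multiset Ω}
    (hsL : ∀ i, ((s.map fun r => X - C r).prod).coeff i ∈ L) (hsw : ∀ r ∈ s, w r ≤ 1)
    {θ : Ω} (hθ : θ ∈ s) (hθs : ∀ r ∈ s.erase θ, w (θ - r) = 1)
    {a : Ω} (ha : a ∈ L) (haθ : w (a - θ) < 1) : θ ∈ L := by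
  set p := (s.map fun r => X - C r).prod
  have hpO : p ∈ lifts w.valuationSubring.subtype := w.prod_X_sub_C_mem_lifts hsw
  have hroots : p.roots = s := roots_multiset_prod_X_sub_C s
  have hθw : w θ ≤ 1 := hsw θ hθ
  have haw : w a ≤ 1 := sub_add_cancel a θ ▸ w.map_add_le haθ.le hθw
  have hp'θ : w (p.derivative.eval θ) = 1 := by
    rw [eval_multiset_prod_X_sub_C_derivative hθ, map_multiset_prod, Multiset.map_map]
    exact Multiset.prod_eq_one fun γ hγ => by
      obtain ⟨r, hr, rfl⟩ := Multiset.mem_map.mp hγ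
      exact hθs r hr
  have hpa : w (p.eval a) < 1 := by
    rw [← sub_zero (p.eval a), ← (isRoot_of_mem_roots (hroots ▸ hθ)).eq_zero]
    exact (w.map_eval_sub_eval_le hpO haw hθw).trans_lt haθ
  have hp'a : w (p.derivative.eval a) = 1 := by
    refine hp'θ ▸ w.map_eq_of_sub_lt (hp'θ ▸ ?_)
    exact (w.map_eval_sub_eval_le (derivative_mem_lifts hpO) haw hθw).trans_lt haθ
  obtain ⟨b, hbL, hb, hba⟩ := hL.exists_isRoot_sub_lt_one (monic_multisetProd_X_sub_C s) hsL
    (w.map_coeff_le_one_of_mem_lifts hpO) ha haw hpa hp'a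
  have hbθ : w (b - θ) < 1 := sub_add_sub_cancel b a θ ▸ w.map_add_lt hba haθ
  obtain rfl : b = θ := by
    by_contra hne
    have hbs : b ∈ s := hroots ▸ mem_roots'.mpr ⟨(monic_multisetProd_X_sub_C s).ne_zero, hb⟩
    have := hθs b (Multiset.mem_erase_of_ne hne |>.mpr hbs)
    rw [w.map_sub_swap, this] at hbθ
    exact lt_irrefl 1 hbθ
  exact hbL

theorem mem_of_sepAlgOver_of_approx [IsAlgClosed Ω] (hL : L.IsHenselian w) {x : Ω}
    (hx : SepAlgOver L x) (happrox : ∀ γ : Γ, γ ≠ 0 → ∃ y ∈ L, w (x - y) < γ) :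
    x ∈ L := by
  classical
  obtain ⟨f, hf0, hfL, hfsep, hfx⟩ := hx
  have hxs : x ∈ f.roots := (mem_roots hf0).mpr hfx
  obtain ⟨y, hyL, hxy⟩ :=
    w.exists_mem_forall_map_sub_lt happrox (nodup_roots hfsep).notMem_erase
  rcases eq_or_ne x y with rfl | hxy0
  · exact hyL
  have hε0 : w (x - y) ≠ 0 := (w.ne_zero_iff).mpr (sub_ne_zero.mpr hxy0)
  obtain ⟨y', hy'L, hxy'⟩ := happrox _ hε0
  set d := y' - y
  have hwd : w d = w (x - y) := by
    rw [show d = (x - y) - (x - y') by ring, w.map_sub_eq_of_lt_left hxy']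
  have hd0 : d ≠ 0 := (w.ne_zero_iff).mp (hwd ▸ hε0)
  have hfy : f.eval y ≠ 0 := fun h =>
    (hxy y ((Multiset.mem_erase_of_ne hxy0.symm).mpr ((mem_roots hf0).mpr h))).false
  set ρ : Ω → Ω := fun r => d / (r - y)
  have hρx : w (ρ x) = 1 := by simp only [ρ, map_div₀, hwd, div_self hε0]
  have hρ : ∀ r ∈ f.roots.erase x, w (ρ r) < 1 := fun r hr =>
    w.map_div_sub_lt_one hwd (hxy r hr)
  have hρL : ρ x ∈ L := by
    refine hL.mem_of_residually_simple_root (s := f.roots.map ρ) (a := 1) ?_ ?_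
      (Multiset.mem_map_of_mem ρ hxs) ?_ L.one_mem ?_
    · rw [Multiset.map_map]
      exact (IsAlgClosed.splits f).coeff_prod_X_sub_C_div_sub_mem hfL hyL
        (L.sub_mem hy'L hyL) hd0 hfy
    · intro r' hr'
      obtain ⟨r, hr, rfl⟩ := Multiset.mem_map.mp hr'
      rcases eq_or_ne r x with rfl | hrx
      · exact hρx.le
      · exact (hρ r ((Multiset.mem_erase_of_ne hrx).mpr hr)).le
    · rw [← Multiset.map_erase_of_mem ρ _ hxs]
      intro r' hr'
      obtain ⟨r, hr, rfl⟩ := Multiset.mem_map.mp hr'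
      rw [w.map_sub_eq_of_lt_left (hρx ▸ hρ r hr), hρx]
    · rw [show 1 - ρ x = (x - y') / (x - y) by
          simp only [ρ, d]; field_simp [sub_ne_zero.mpr hxy0]; ring,
        map_div₀, div_lt_one₀ (zero_lt_iff.mpr hε0)]
      exact hxy'
  have hx : x = y + d / ρ x := by
    simp only [ρ]; field_simp [sub_ne_zero.mpr hxy0]; ring
  rw [hx]
  exact L.add_mem hyL (L.div_mem (L.sub_mem hy'L hyL) hρL)

end Subfield.IsHenselian

theorem SepAlgOver.mono {Ω : Type*} [Field Ω] {M N : Subfield Ω} (hMN : M ≤ N) {x : Ω}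
    (hx : SepAlgOver M x) : SepAlgOver N x :=
  let ⟨f, hf0, hfM, hfsep, hfx⟩ := hx
  ⟨f, hf0, fun i => hMN (hfM i), hfsep, hfx⟩

theorem stmt7_general {Ω Γ : Type*} [Field Ω] [IsAlgClosed Ω] [LinearOrderedCommGroupWithZero Γ]
    (w : Valuation Ω Γ) (K F : Subfield Ω)
    (hcomp : ∀ x ∈ F, ∀ γ : Γ, γ ≠ 0 → ∃ y ∈ K, w (x - y) < γ)  -- F ⊆ K^c
    : ∀ T : Set Ω, IsSepTranscBasis K F T →
      F ≤ henselization w (Subfield.closure ((K : Set Ω) ∪ T)) := by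
  intro T hT
  refine le_sInf fun L ⟨hKTL, hL⟩ x hxF => ?_
  refine hL.mem_of_sepAlgOver_of_approx ((hT.2.2 x hxF).mono hKTL) fun γ hγ => ?_
  obtain ⟨y, hyK, hy⟩ := hcomp x hxF γ hγ
  exact ⟨y, hKTL (Subfield.subset_closure (Or.inl hyK)), hy⟩

/-- Let (K,v) be a henselian valued field and (F|K,v) a valued function
field which is a separable subextension of the completion K^c of (K,v); being
contained in the completion is expressed by: every element of F can be approximated
by elements of K to any prescribed precision.  Then for every separating
transcendence basis T of F|K, F is contained in the henselization of (K(T),v). -/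
theorem stmt7 {Ω Γ : Type*} [Field Ω] [IsAlgClosed Ω] [LinearOrderedCommGroupWithZero Γ]
    (w : Valuation Ω Γ) (K F : Subfield Ω) (hKF : K ≤ F)
    (hhens : Subfield.IsHenselian w K)
    (hfg : ∃ s : Finset Ω, F = Subfield.closure ((K : Set Ω) ∪ ↑s))
    (hcomp : ∀ x ∈ F, ∀ γ : Γ, γ ≠ 0 → ∃ y ∈ K, w (x - y) < γ)  -- F ⊆ K^c
    : ∀ T : Set Ω, IsSepTranscBasis K F T →
      F ≤ henselization w (Subfield.closure ((K : Set Ω) ∪ T)) :=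
  stmt7_general w K F hcomp
end

section
/- Let (L,P) be a valued field where the place P is the composition Q₁Q₂ of a place Q₁ on L and a place Q₂ on the residue field LQ₁. Then an extension (L'|L,P) is immediate if and only if v_{Q₁}L' = v_{Q₁}L and the residue field extension (L'Q₁|LQ₁, Q₂) is immediate. -/
/-- The extension (Ω|L) of valued fields is immediate with respect to the valuation
(sub)ring O of Ω: every value of Ω is realized in L (x and y have the same value iff
x/y and y/x both lie in O), and every residue of Ω is realized in L (x - y lies in
the maximal ideal of O, i.e. x - y ∈ O and x - y is a nonunit of O). -/
def ImmediateOver {F : Type*} [Field F] (O : ValuationSubring F) (L : Subfield F) : Prop :=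
  (∀ x : F, x ≠ 0 → ∃ y ∈ L, y ≠ 0 ∧ x * y⁻¹ ∈ O ∧ y * x⁻¹ ∈ O) ∧
  (∀ x ∈ O, ∃ y ∈ L, (x - y) ∈ O ∧ (x - y ≠ 0 → (x - y)⁻¹ ∉ O))

/-- The residue field L Q₁ of the subfield L with respect to the valuation ring O₁,
as a subfield of the residue field of O₁. -/
noncomputable def resSubfield {F : Type*} [Field F] (O₁ : ValuationSubring F) (L : Subfield F) :
    Subfield (IsLocalRing.ResidueField O₁) :=
  Subfield.closure (IsLocalRing.residue O₁ '' {a : O₁ | (a : F) ∈ L})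

/-!
Write `ρ` for the place of `O₁`, so that `O_P = {x ∈ O₁ | ρ x ∈ O₂}`. Then `v_P x = 1` iff
`v₁ x = 1` and `v₂ (ρ x) = 1`, and `v_P x < 1` iff `x ∈ O₁` and `v₂ (ρ x) < 1`. Applied to
quotients `x / y`, the first fact shows that a `v_P`-value of `Ω` is attained on `L` exactly when
its coarsening `v₁` is attained by some `y ∈ L` and the `v₂`-value of the residue of the `v₁`-unit
`x / y` is attained on `LQ₁`. Applied to differences `x - y`, the second shows that `L` realizes
the residues of `P` exactly when `LQ₁` realizes those of `Q₂`.
-/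

namespace ValuationSubring

variable {F : Type*} [Field F] (O : ValuationSubring F)

theorem valuation_eq_one_iff_mem_and_inv_mem {x : F} :
    O.valuation x = 1 ↔ x ≠ 0 ∧ x ∈ O ∧ x⁻¹ ∈ O := by
  rw [← valuation_le_one_iff, ← valuation_le_one_iff, map_inv₀, ← O.valuation.ne_zero_iff]
  constructor
  · intro h
    simp [h]
  · rintro ⟨hx, h1, h2⟩
    exact le_antisymm h1 ((inv_le_one₀ (zero_lt_iff.2 hx)).1 h2)

theorem mem_and_inv_notMem_iff {z : F} : z ∈ O ∧ (z ≠ 0 → z⁻¹ ∉ O) ↔ O.valuation z < 1 := by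
  rw [← mem_nonunits_iff, mem_nonunits_iff_or]
  constructor
  · rintro ⟨-, h⟩
    exact or_iff_not_imp_left.2 h
  · rintro (rfl | h)
    · simp
    · exact ⟨(O.mem_or_inv_mem z).resolve_right h, fun _ => h⟩

theorem mul_inv_mem_and_mul_inv_mem_iff {x y : F} (hx : x ≠ 0) (hy : y ≠ 0) :
    x * y⁻¹ ∈ O ∧ y * x⁻¹ ∈ O ↔ O.valuation x = O.valuation y := by
  rw [← mul_inv_eq_one₀ (O.valuation.ne_zero_iff.2 hy), ← map_inv₀, ← map_mul,
    valuation_eq_one_iff_mem_and_inv_mem, mul_inv, inv_inv, mul_comm x⁻¹]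
  simp [hx, hy]

variable (L : Subfield F)

/-- `vF = vL`. -/
def ValuesAttainedIn : Prop :=
  ∀ x : F, ∃ y ∈ L, O.valuation x = O.valuation y

/-- `FO = LO`. -/
def ResiduesAttainedIn : Prop :=
  ∀ x ∈ O, ∃ y ∈ L, O.valuation (x - y) < 1

theorem valuesAttainedIn_iff_mul_inv_mem : O.ValuesAttainedIn L ↔
    ∀ x : F, x ≠ 0 → ∃ y ∈ L, y ≠ 0 ∧ x * y⁻¹ ∈ O ∧ y * x⁻¹ ∈ O := by
  constructor
  · intro hL x hx
    obtain ⟨y, hyL, hxy⟩ := hL x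
    have hy : y ≠ 0 := O.valuation.ne_zero_iff.1 (hxy ▸ O.valuation.ne_zero_iff.2 hx)
    exact ⟨y, hyL, hy, (O.mul_inv_mem_and_mul_inv_mem_iff hx hy).2 hxy⟩
  · intro hL x
    by_cases hx : x = 0
    · exact ⟨0, L.zero_mem, by rw [hx]⟩
    obtain ⟨y, hyL, hy, hxy⟩ := hL x hx
    exact ⟨y, hyL, (O.mul_inv_mem_and_mul_inv_mem_iff hx hy).1 hxy⟩

/-- The place of `O`, with its value `∞` off `O` replaced by `0`; this makes `place_inv` hold
without side conditions. -/
noncomputable def place (x : F) : IsLocalRing.ResidueField O :=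
  open Classical in if h : x ∈ O then IsLocalRing.residue O ⟨x, h⟩ else 0

theorem place_of_mem {x : F} (h : x ∈ O) : O.place x = IsLocalRing.residue O ⟨x, h⟩ :=
  dif_pos h

theorem place_surjective : Function.Surjective O.place := fun ξ => by
  obtain ⟨⟨x, hx⟩, rfl⟩ := IsLocalRing.residue_surjective ξ
  exact ⟨x, O.place_of_mem hx⟩

theorem place_ne_zero_iff {x : F} : O.place x ≠ 0 ↔ O.valuation x = 1 := by
  by_cases h : x ∈ O
  · rw [O.place_of_mem h, IsLocalRing.residue_ne_zero_iff_isUnit, valuation_eq_one_iff]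
  · rw [place, dif_neg h, ne_self_iff_false, false_iff]
    exact fun h1 => h ((O.valuation_le_one_iff x).1 h1.le)

theorem place_eq_zero_iff {x : F} : O.place x = 0 ↔ O.valuation x ≠ 1 := by
  simpa only [not_not] using O.place_ne_zero_iff.not

theorem place_mul {x y : F} (hx : x ∈ O) (hy : y ∈ O) :
    O.place (x * y) = O.place x * O.place y := by
  rw [O.place_of_mem hx, O.place_of_mem hy, O.place_of_mem (O.mul_mem _ _ hx hy), ← map_mul]
  rfl

theorem place_sub {x y : F} (hx : x ∈ O) (hy : y ∈ O) :
    O.place (x - y) = O.place x - O.place y := by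
  rw [O.place_of_mem hx, O.place_of_mem hy, O.place_of_mem (sub_mem hx hy), ← map_sub]
  rfl

theorem place_inv (x : F) : O.place x⁻¹ = (O.place x)⁻¹ := by
  by_cases h : O.valuation x = 1
  · obtain ⟨hx0, hx, hxi⟩ := O.valuation_eq_one_iff_mem_and_inv_mem.1 h
    refine eq_inv_of_mul_eq_one_right ?_
    rw [← O.place_mul hx hxi, mul_inv_cancel₀ hx0, O.place_of_mem O.one_mem]
    exact map_one _
  · have h' : O.valuation x⁻¹ ≠ 1 := by rwa [map_inv₀, inv_ne_one]
    rw [O.place_eq_zero_iff.2 h, O.place_eq_zero_iff.2 h', inv_zero]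

end ValuationSubring

open ValuationSubring

theorem immediateOver_iff {F : Type*} [Field F] (O : ValuationSubring F) (L : Subfield F) :
    ImmediateOver O L ↔ O.ValuesAttainedIn L ∧ O.ResiduesAttainedIn L := by
  simp only [ImmediateOver, valuesAttainedIn_iff_mul_inv_mem, ResiduesAttainedIn,
    mem_and_inv_notMem_iff]

theorem mem_resSubfield_iff {F : Type*} [Field F] {O : ValuationSubring F} {L : Subfield F}
    {η : IsLocalRing.ResidueField O} : η ∈ resSubfield O L ↔ ∃ b ∈ L, b ∈ O ∧ O.place b = η := by
  constructor
  · intro hη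
    have hS : IsLocalRing.residue O '' {a : O | (a : F) ∈ L} =
        (L.toSubring.comap O.subtype).map (IsLocalRing.residue O) := rfl
    rw [resSubfield, Subfield.mem_closure_iff, hS, Subring.closure_eq] at hη
    obtain ⟨_, ⟨⟨a, ha⟩, haL, rfl⟩, _, ⟨⟨b, hb⟩, hbL, rfl⟩, rfl⟩ := hη
    rw [← O.place_of_mem ha, ← O.place_of_mem hb]
    by_cases hb1 : O.valuation b = 1
    · have hbi := (O.valuation_eq_one_iff_mem_and_inv_mem.1 hb1).2.2
      refine ⟨a * b⁻¹, mul_mem haL (inv_mem hbL), O.mul_mem _ _ ha hbi, ?_⟩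
      rw [O.place_mul ha hbi, place_inv, div_eq_mul_inv]
    · refine ⟨0, L.zero_mem, O.zero_mem, ?_⟩
      rw [O.place_eq_zero_iff.2 hb1, div_zero, place_eq_zero_iff, map_zero]
      exact zero_ne_one
  · rintro ⟨b, hbL, hb, rfl⟩
    rw [O.place_of_mem hb]
    exact Subfield.subset_closure ⟨⟨b, hb⟩, hbL, rfl⟩

namespace ValuationSubring

variable {F : Type*} [Field F]

/-- `OP` is the valuation ring of the composite place `P = Q₁Q₂`. -/
def IsComposite (OP O₁ : ValuationSubring F) (O₂ : ValuationSubring (IsLocalRing.ResidueField O₁)) :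
    Prop :=
  ∀ x, x ∈ OP ↔ x ∈ O₁ ∧ O₁.place x ∈ O₂

namespace IsComposite

variable {OP O₁ : ValuationSubring F} {O₂ : ValuationSubring (IsLocalRing.ResidueField O₁)}

theorem le (h : IsComposite OP O₁ O₂) : OP ≤ O₁ := fun x hx => ((h x).1 hx).1

theorem valuation_eq_of_valuation_eq (h : IsComposite OP O₁ O₂) {x y : F}
    (hxy : OP.valuation x = OP.valuation y) : O₁.valuation x = O₁.valuation y := by
  simpa only [mapOfLE_valuation_apply] using congrArg (OP.mapOfLE O₁ h.le) hxy

theorem valuation_eq_one_iff (h : IsComposite OP O₁ O₂) {x : F} :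
    OP.valuation x = 1 ↔ O₁.valuation x = 1 ∧ O₂.valuation (O₁.place x) = 1 := by
  have hρ := O₁.place_ne_zero_iff (x := x)
  simp only [valuation_eq_one_iff_mem_and_inv_mem, h x, h x⁻¹, place_inv] at hρ ⊢
  tauto

theorem valuation_lt_one_iff (h : IsComposite OP O₁ O₂) {x : F} :
    OP.valuation x < 1 ↔ x ∈ O₁ ∧ O₂.valuation (O₁.place x) < 1 := by
  have hρ : O₂.valuation (O₁.place x) = 1 → O₁.valuation x = 1 := fun h1 =>
    O₁.place_ne_zero_iff.1 fun h0 => by simp [h0] at h1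
  rw [lt_iff_le_and_ne, lt_iff_le_and_ne, valuation_le_one_iff, valuation_le_one_iff, h x, ne_eq,
    h.valuation_eq_one_iff]
  tauto

theorem valuation_eq_iff (h : IsComposite OP O₁ O₂) {x y : F} (hx : O₁.valuation x = 1)
    (hy : O₁.valuation y = 1) :
    OP.valuation x = OP.valuation y ↔ O₂.valuation (O₁.place x) = O₂.valuation (O₁.place y) := by
  obtain ⟨-, hx₁, -⟩ := O₁.valuation_eq_one_iff_mem_and_inv_mem.1 hx
  obtain ⟨hy₀, -, hy₁⟩ := O₁.valuation_eq_one_iff_mem_and_inv_mem.1 hy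
  have hρy : O₁.place y ≠ 0 := O₁.place_ne_zero_iff.2 hy
  rw [← mul_inv_eq_one₀ (OP.valuation.ne_zero_iff.2 hy₀), ← map_inv₀, ← map_mul,
    h.valuation_eq_one_iff, O₁.place_mul hx₁ hy₁, place_inv, map_mul, map_inv₀, hx, hy, inv_one,
    mul_one, eq_self, true_and, map_mul, map_inv₀, mul_inv_eq_one₀ (O₂.valuation.ne_zero_iff.2 hρy)]

variable (L : Subfield F)

theorem valuesAttainedIn_residue (h : IsComposite OP O₁ O₂) (hL : OP.ValuesAttainedIn L) :
    O₂.ValuesAttainedIn (resSubfield O₁ L) := by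
  intro ξ
  obtain ⟨x, rfl⟩ := O₁.place_surjective ξ
  by_cases hx : O₁.valuation x = 1
  · obtain ⟨y, hyL, hxy⟩ := hL x
    have hy : O₁.valuation y = 1 := h.valuation_eq_of_valuation_eq hxy ▸ hx
    exact ⟨O₁.place y, mem_resSubfield_iff.2 ⟨y, hyL, (O₁.valuation_le_one_iff y).1 hy.le, rfl⟩,
      (h.valuation_eq_iff hx hy).1 hxy⟩
  · exact ⟨0, (resSubfield O₁ L).zero_mem, by rw [O₁.place_eq_zero_iff.2 hx]⟩

theorem valuesAttainedIn_of_residue (h : IsComposite OP O₁ O₂) (hL₁ : O₁.ValuesAttainedIn L)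
    (hL₂ : O₂.ValuesAttainedIn (resSubfield O₁ L)) : OP.ValuesAttainedIn L := by
  intro x
  by_cases hx : x = 0
  · exact ⟨0, L.zero_mem, by rw [hx]⟩
  obtain ⟨y, hyL, hxy⟩ := hL₁ x
  have hy : y ≠ 0 := O₁.valuation.ne_zero_iff.1 (hxy ▸ O₁.valuation.ne_zero_iff.2 hx)
  have hu : O₁.valuation (x * y⁻¹) = 1 := by
    rw [map_mul, map_inv₀, hxy, mul_inv_cancel₀ (O₁.valuation.ne_zero_iff.2 hy)]
  obtain ⟨η, hη, huη⟩ := hL₂ (O₁.place (x * y⁻¹))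
  obtain ⟨b, hbL, -, rfl⟩ := mem_resSubfield_iff.1 hη
  have hb : O₁.valuation b = 1 := by
    rw [← place_ne_zero_iff, ← O₂.valuation.ne_zero_iff, ← huη, O₂.valuation.ne_zero_iff,
      place_ne_zero_iff]
    exact hu
  refine ⟨b * y, L.mul_mem hbL hyL, ?_⟩
  calc OP.valuation x = OP.valuation (x * y⁻¹) * OP.valuation y := by
        rw [← map_mul, inv_mul_cancel_right₀ hy]
    _ = OP.valuation (b * y) := by rw [(h.valuation_eq_iff hu hb).2 huη, map_mul]

theorem valuesAttainedIn_iff (h : IsComposite OP O₁ O₂) :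
    OP.ValuesAttainedIn L ↔ O₁.ValuesAttainedIn L ∧ O₂.ValuesAttainedIn (resSubfield O₁ L) :=
  ⟨fun hL => ⟨fun x => (hL x).imp fun _ => .imp_right h.valuation_eq_of_valuation_eq,
    h.valuesAttainedIn_residue L hL⟩, fun hL => h.valuesAttainedIn_of_residue L hL.1 hL.2⟩

theorem residuesAttainedIn_iff (h : IsComposite OP O₁ O₂) :
    OP.ResiduesAttainedIn L ↔ O₂.ResiduesAttainedIn (resSubfield O₁ L) := by
  constructor
  · intro hL ξ hξ
    obtain ⟨⟨x, hx⟩, rfl⟩ := IsLocalRing.residue_surjective ξ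
    rw [← O₁.place_of_mem hx] at hξ ⊢
    obtain ⟨y, hyL, hxy⟩ := hL x ((h x).2 ⟨hx, hξ⟩)
    obtain ⟨hxy₁, hxy₂⟩ := h.valuation_lt_one_iff.1 hxy
    have hy : y ∈ O₁ := by simpa using sub_mem hx hxy₁
    refine ⟨O₁.place y, mem_resSubfield_iff.2 ⟨y, hyL, hy, rfl⟩, ?_⟩
    rwa [← O₁.place_sub hx hy]
  · intro hL x hx
    obtain ⟨hx₁, hx₂⟩ := (h x).1 hx
    obtain ⟨η, hη, hxη⟩ := hL _ hx₂
    obtain ⟨b, hbL, hb, rfl⟩ := mem_resSubfield_iff.1 hη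
    exact ⟨b, hbL, h.valuation_lt_one_iff.2 ⟨sub_mem hx₁ hb, by rwa [O₁.place_sub hx₁ hb]⟩⟩

end IsComposite

end ValuationSubring

/-- Let (Ω,P) be a valued field where the place P is the composition
Q₁Q₂, i.e. the valuation ring O_P of P is the preimage, under the residue map of the
valuation ring O₁ of Q₁, of the valuation ring O₂ of Q₂ on the residue field ΩQ₁.
Then for a subfield L of Ω, the extension (Ω|L,P) is immediate if and only if
v_{Q₁}Ω = v_{Q₁}L and the residue field extension (ΩQ₁ | LQ₁, Q₂) is immediate. -/
theorem stmt10 {Ω : Type*} [Field Ω] (L : Subfield Ω)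
    (O₁ OP : ValuationSubring Ω)
    (O₂ : ValuationSubring (IsLocalRing.ResidueField O₁))
    (hcomp : ∀ x : Ω, x ∈ OP ↔ ∃ hx : x ∈ O₁, IsLocalRing.residue O₁ ⟨x, hx⟩ ∈ O₂) :
    ImmediateOver OP L ↔
      ((∀ x : Ω, x ≠ 0 → ∃ y ∈ L, y ≠ 0 ∧ x * y⁻¹ ∈ O₁ ∧ y * x⁻¹ ∈ O₁) ∧
        ImmediateOver O₂ (resSubfield O₁ L)) := by
  have h : OP.IsComposite O₁ O₂ := fun x => by
    rw [hcomp]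
    exact ⟨fun ⟨hx, hx₂⟩ => ⟨hx, O₁.place_of_mem hx ▸ hx₂⟩,
      fun ⟨hx, hx₂⟩ => ⟨hx, O₁.place_of_mem hx ▸ hx₂⟩⟩
  rw [immediateOver_iff, immediateOver_iff, ← valuesAttainedIn_iff_mul_inv_mem,
    h.valuesAttainedIn_iff, h.residuesAttainedIn_iff, and_assoc]
end

section
/- Let (K,v) be a separable-algebraically maximal valued field and (K(x)|K,v) an immediate transcendental extension. Then the approximation type of x over K is transcendental: for every polynomial h(X) ∈ K[X] there is α ∈ v(x−K) such that v(h(c)) is constant for all c ∈ K with v(x−c) ≥ α. -/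
/-- The extension K ≤ L of subfields of the valued field (Ω,w) is immediate:
value group and residue field do not grow. -/
def IsImmediateExt {Ω Γ : Type*} [Field Ω] [LinearOrderedCommGroupWithZero Γ]
    (w : Valuation Ω Γ) (K L : Subfield Ω) : Prop :=
  (∀ x ∈ L, x ≠ 0 → ∃ y ∈ K, w y = w x) ∧
  (∀ x ∈ L, w x = 1 → ∃ y ∈ K, w (x - y) < 1)

/-- x is transcendental over the subfield M. -/
def TransOver {Ω : Type*} [Field Ω] (M : Subfield Ω) (x : Ω) : Prop :=
  ∀ f : Polynomial Ω, (∀ i, f.coeff i ∈ M) → Polynomial.eval x f = 0 → f = 0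

/-!
Call `z ∈ Ω` a best approximation of `t` over `K` if `w (t - z) ≤ w (t - c)` for every `c ∈ K`.
As `K(t)|K` is immediate, no element of `K` is one, and `w (h c)` is constant as soon as `c` is
closer to `t` than every root of `h` that is not a best approximation. So it suffices to show that
no element algebraic over `K` is a best approximation of `t`, by induction on the degree of its
minimal polynomial, simultaneously for all such `t`.

If a best approximation `z` is separable and all algebraic elements of smaller degree are not,
then `r(z)` and `r(t)` have the same value for every `r` of degree `< [K(z) : K]`, so `K(z)|K` is
immediate; maximality gives `z ∈ K`, which is impossible. If `z` is inseparable, its minimal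
polynomial is `m(X ^ p)`, and by induction for `t ^ p`, `w (m y)` is constant once `t ^ p - y`
is small enough. If `t ^ p - c ^ p` gets that small for some `c ∈ K`, then `w` of the minimal
polynomial of `z` is eventually constant on `K`, whereas its best-approximating root `z` makes it
strictly decrease. Otherwise a `p`-th root `s` of an element of `K` is closer to `t` than all of
`K`, and the separable polynomial `X ^ p + d X - s ^ p` has a root near `s` that is a separable
best approximation of degree `≤ p ≤ [K(z) : K]`.
-/

section

open Polynomial IntermediateField

section PolynomialLemmas

variable {F : Type*} [Field F]

theorem separable_X_pow_add_C_mul_X_sub_C (p : ℕ) [CharP F p]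
    {d : F} (hd : d ≠ 0) (c : F) : (X ^ p + (C d * X - C c)).Separable := by
  have h : X ^ p + (C d * X - C c) = C 1 * X ^ p + C d * X + C (-c) := by
    rw [C_neg, C_1]; ring
  rw [h]
  exact separable_C_mul_X_pow_add_C_mul_X_add_C' p p 1 d (-c) dvd_rfl (isUnit_iff_ne_zero.2 hd)

theorem degree_C_mul_X_sub_C_lt {p : ℕ} (hp : 1 < p) (d c : F) :
    (C d * X - C c).degree < (p : WithBot ℕ) :=
  (degree_sub_le _ _).trans_lt <| max_lt ((degree_C_mul_X_le d).trans_lt (by exact_mod_cast hp))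
    (degree_C_le.trans_lt (by exact_mod_cast (zero_lt_one.trans hp)))

theorem monic_X_pow_add_C_mul_X_sub_C {p : ℕ} (hp : 1 < p) (d c : F) :
    (X ^ p + (C d * X - C c)).Monic :=
  monic_X_pow_add (degree_C_mul_X_sub_C_lt hp d c)

theorem natDegree_X_pow_add_C_mul_X_sub_C {p : ℕ} (hp : 1 < p) (d c : F) :
    (X ^ p + (C d * X - C c)).natDegree = p := by
  have hlt : (C d * X - C c).degree < (X ^ p : Polynomial F).degree := by
    rw [degree_X_pow]
    exact degree_C_mul_X_sub_C_lt hp d c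
  rw [natDegree_add_eq_left_of_degree_lt hlt, natDegree_X_pow]

end PolynomialLemmas

section Algebraic

variable {Ω : Type*} [Field Ω] {K : Subfield Ω}

theorem transcendental_of_transOver {t : Ω} (h : TransOver K t) : Transcendental K t := by
  refine transcendental_iff.2 fun q hq => ?_
  have hmap := h (q.map (algebraMap K Ω)) (fun i => by rw [coeff_map]; exact (q.coeff i).2)
    (by rwa [eval_map, ← aeval_def])
  exact (Polynomial.map_eq_zero_iff (algebraMap K Ω).injective).1 hmap

theorem notMem_of_transcendental {t : Ω} (h : Transcendental K t) : t ∉ K :=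
  fun ht => h (isAlgebraic_algebraMap (⟨t, ht⟩ : K))

theorem exists_map_eq_of_coeff_mem {P : Polynomial Ω} (hP : ∀ i, P.coeff i ∈ K) :
    ∃ q : Polynomial K, q.map (algebraMap K Ω) = P :=
  (mem_lifts P).1 <| (lifts_iff_coeff_lifts P).2 fun i => ⟨⟨_, hP i⟩, rfl⟩

theorem ne_zero_and_aeval_eq_zero_of_mem_roots_map {q : Polynomial K} {r : Ω}
    (hr : r ∈ (q.map (algebraMap K Ω)).roots) : q ≠ 0 ∧ aeval r q = 0 := by
  have hq : q ≠ 0 := fun h => by simp [h] at hr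
  exact ⟨hq, by rwa [mem_roots_map hq, ← aeval_def] at hr⟩

theorem isIntegral_of_mem_roots_map {q : Polynomial K} {r : Ω}
    (hr : r ∈ (q.map (algebraMap K Ω)).roots) : IsIntegral K r :=
  (ne_zero_and_aeval_eq_zero_of_mem_roots_map hr).elim fun hq h =>
    IsAlgebraic.isIntegral ⟨q, hq, h⟩

theorem natDegree_minpoly_le_of_mem_roots_map {q : Polynomial K} {r : Ω}
    (hr : r ∈ (q.map (algebraMap K Ω)).roots) : (minpoly K r).natDegree ≤ q.natDegree :=
  (ne_zero_and_aeval_eq_zero_of_mem_roots_map hr).elim fun hq h =>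
    natDegree_le_natDegree (minpoly.degree_le_of_ne_zero K r hq h)

theorem aeval_mem_closure (t : Ω) (q : Polynomial K) :
    aeval t q ∈ Subfield.closure ((K : Set Ω) ∪ {t}) := by
  rw [aeval_eq_sum_range]
  refine sum_mem fun i _ => ?_
  rw [Algebra.smul_def]
  have ht : t ∈ Subfield.closure ((K : Set Ω) ∪ {t}) :=
    Subfield.subset_closure (Set.mem_union_right _ rfl)
  exact mul_mem (Subfield.subset_closure (Or.inl (q.coeff i).2)) (pow_mem ht i)

theorem exists_aeval_eq_of_mem_adjoin {Z : Ω} (hZ : IsIntegral K Z) {x : Ω}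
    (hx : x ∈ K⟮Z⟯) :
    ∃ r : Polynomial K, r.natDegree < (minpoly K Z).natDegree ∧ aeval Z r = x := by
  obtain ⟨r, hr, hrx⟩ := (adjoin.powerBasis hZ).exists_eq_aeval ⟨x, hx⟩
  refine ⟨r, by rwa [adjoin.powerBasis_dim] at hr, ?_⟩
  rw [adjoin.powerBasis_gen] at hrx
  simpa using (congrArg Subtype.val hrx).symm

theorem sepAlgOver_of_isSeparable {x : Ω} (hx : IsSeparable K x) : SepAlgOver K x :=
  ⟨(minpoly K x).map (algebraMap K Ω), map_ne_zero (minpoly.ne_zero hx.isIntegral),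
    fun i => by rw [coeff_map]; exact ((minpoly K x).coeff i).2, Separable.map hx,
    by rw [eval_map, ← aeval_def, minpoly.aeval]⟩

theorem le_toSubfield_adjoin (Z : Ω) : K ≤ (K⟮Z⟯).toSubfield :=
  fun x hx => (K⟮Z⟯).algebraMap_mem ⟨x, hx⟩

theorem exists_expand_eq_minpoly {z : Ω} (hz : IsIntegral K z) (hsep : ¬ IsSeparable K z) :
    ∃ p, p.Prime ∧ CharP Ω p ∧ ∃ m₁ : Polynomial K, expand K p m₁ = minpoly K z := by
  obtain ⟨p, hchar⟩ := CharP.exists Ω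
  rcases CharP.char_is_prime_or_zero Ω p with hp | rfl
  · obtain h | ⟨-, m₁, -, hm₁⟩ := separable_or p (minpoly.irreducible hz)
    · exact absurd h hsep
    · exact ⟨p, hp, hchar, m₁, hm₁⟩
  · have := CharP.charP_to_charZero Ω
    exact absurd (minpoly.irreducible hz).separable hsep

end Algebraic

section Approximation

variable {Ω Γ : Type*} [Field Ω] [LinearOrderedCommGroupWithZero Γ] (w : Valuation Ω Γ)
  (K : Subfield Ω)

/-- `z` is at least as close to `t` as every element of `K`; the valuation is written
multiplicatively, so "closer" means "smaller `w`" (additively: `v (t - z) ≥ v (t - K)`). -/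
def IsBestApprox (t z : Ω) : Prop := ∀ c ∈ K, w (t - z) ≤ w (t - c)

variable {w K}

theorem not_isBestApprox_iff {t z : Ω} :
    ¬ IsBestApprox w K t z ↔ ∃ c ∈ K, w (t - c) < w (t - z) := by
  simp [IsBestApprox]

theorem valuation_sub_eq_of_lt {t z c : Ω} (h : w (t - z) < w (t - c)) :
    w (z - c) = w (t - c) := by
  rw [← sub_sub_sub_cancel_left c z t]
  exact w.map_sub_eq_of_lt_left h

theorem exists_lt_of_not_isBestApprox {t : Ω} (s : Multiset Ω)
    (hs : ∀ r ∈ s, ¬ IsBestApprox w K t r) {c₀ : Ω} (hc₀ : c₀ ∈ K) :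
    ∃ c ∈ K, w (t - c) ≤ w (t - c₀) ∧ ∀ r ∈ s, w (t - c) < w (t - r) := by
  induction s using Multiset.induction_on with
  | empty => exact ⟨c₀, hc₀, le_rfl, by simp⟩
  | cons a s ih =>
    obtain ⟨c, hc, hcc₀, hcs⟩ := ih fun r hr => hs r (Multiset.mem_cons_of_mem hr)
    obtain ⟨c', hc', hc'a⟩ := not_isBestApprox_iff.1 (hs a (Multiset.mem_cons_self a s))
    rcases le_total (w (t - c)) (w (t - c')) with h | h
    · exact ⟨c, hc, hcc₀, Multiset.forall_mem_cons.2 ⟨h.trans_lt hc'a, hcs⟩⟩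
    · exact ⟨c', hc', h.trans hcc₀,
        Multiset.forall_mem_cons.2 ⟨hc'a, fun r hr => h.trans_lt (hcs r hr)⟩⟩

theorem IsImmediateExt.mono {L L' : Subfield Ω} (h : IsImmediateExt w K L) (hL : L' ≤ L) :
    IsImmediateExt w K L' :=
  ⟨fun x hx => h.1 x (hL hx), fun x hx => h.2 x (hL hx)⟩

theorem not_isBestApprox_of_isImmediateExt {t : Ω} (ht : t ∉ K)
    (himm : IsImmediateExt w K (Subfield.closure ((K : Set Ω) ∪ {t}))) {c : Ω} (hc : c ∈ K) :
    ¬ IsBestApprox w K t c := by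
  have htc : t - c ∈ Subfield.closure ((K : Set Ω) ∪ {t}) :=
    sub_mem (Subfield.subset_closure (Or.inr rfl)) (Subfield.subset_closure (Or.inl hc))
  have htc0 : t - c ≠ 0 := sub_ne_zero.2 fun h => ht (h ▸ hc)
  obtain ⟨d, hd, hdv⟩ := himm.1 _ htc htc0
  have hd0 : d ≠ 0 := by
    rintro rfl
    exact htc0 (w.zero_iff.1 (by rw [← hdv, map_zero]))
  have hv1 : w ((t - c) / d) = 1 := by
    rw [map_div₀, hdv, div_self (w.ne_zero_iff.2 htc0)]
  obtain ⟨e, he, hev⟩ :=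
    himm.2 _ (div_mem htc (Subfield.subset_closure (Or.inl hd))) hv1
  refine not_isBestApprox_iff.2 ⟨c + d * e, add_mem hc (mul_mem hd he), ?_⟩
  calc w (t - (c + d * e)) = w d * w ((t - c) / d - e) := by
        rw [← map_mul]; congr 1; field_simp; ring
    _ < w d * 1 := mul_lt_mul_of_pos_left hev (zero_lt_iff.2 (w.ne_zero_iff.2 hd0))
    _ = w (t - c) := by rw [mul_one, hdv]

theorem Subfield.closure_union_singleton_pow_le (S : Set Ω) (t : Ω) (n : ℕ) :
    Subfield.closure (S ∪ {t ^ n}) ≤ Subfield.closure (S ∪ {t}) := by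
  rw [closure_le, Set.union_subset_iff, Set.singleton_subset_iff]
  refine ⟨Set.subset_union_left.trans subset_closure, ?_⟩
  have ht : t ∈ Subfield.closure (S ∪ {t}) := subset_closure (Set.mem_union_right S rfl)
  exact pow_mem ht n

theorem exists_valuation_mul_eq_valuation_sub_pow {p : ℕ} [Fact p.Prime] [CharP Ω p]
    {t : Ω} (ht : Transcendental K t)
    (himm : IsImmediateExt w K (Subfield.closure ((K : Set Ω) ∪ {t})))
    {s : Ω} (hsK : s ^ p ∈ K) (hs : w (t - s) < w t) :
    ∃ d ∈ K, d ≠ 0 ∧ w (d * s) = w (t - s) ^ p := by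
  have hp : p.Prime := Fact.out
  have htmem : t ∈ Subfield.closure ((K : Set Ω) ∪ {t}) :=
    Subfield.subset_closure (Set.mem_union_right _ rfl)
  have ht0 : t ≠ 0 := fun h => notMem_of_transcendental ht (h ▸ K.zero_mem)
  have htp : t ^ p - s ^ p ≠ 0 :=
    sub_ne_zero.2 fun h => notMem_of_transcendental (ht.pow hp.pos) (h ▸ hsK)
  obtain ⟨a, ha, hav⟩ := himm.1 t htmem ht0
  obtain ⟨b, hb, hbv⟩ :=
    himm.1 _ (sub_mem (pow_mem htmem p) (Subfield.subset_closure (Or.inl hsK))) htp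
  have ha0 : w a ≠ 0 := hav ▸ w.ne_zero_iff.2 ht0
  have hb0 : w b ≠ 0 := hbv ▸ w.ne_zero_iff.2 htp
  have hws : w s = w t := by
    simpa using valuation_sub_eq_of_lt (w := w) (t := t) (z := s) (c := 0) (by rwa [sub_zero])
  refine ⟨b / a, div_mem hb ha, div_ne_zero (w.ne_zero_iff.1 hb0) (w.ne_zero_iff.1 ha0), ?_⟩
  rw [map_mul, map_div₀, hws, ← hav, div_mul_cancel₀ _ ha0, hbv, ← sub_pow_char, map_pow]

end Approximation

section AlgClosed

variable {Ω Γ : Type*} [Field Ω] [IsAlgClosed Ω] [LinearOrderedCommGroupWithZero Γ]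
  {w : Valuation Ω Γ} {K : Subfield Ω}

theorem valuation_eval_eq_mul_prod_roots (P : Polynomial Ω) (z : Ω) :
    w (P.eval z) = w P.leadingCoeff * (P.roots.map fun r => w (z - r)).prod := by
  conv_lhs => rw [(IsAlgClosed.splits P).eq_prod_roots]
  simp [eval_multiset_prod, map_multiset_prod, Multiset.map_map]

theorem exists_mem_roots_valuation_sub_le {P : Polynomial Ω} (hP : P.Monic)
    (hdeg : P.natDegree ≠ 0) {s : Ω} {γ : Γ} (h : w (P.eval s) ≤ γ ^ P.natDegree) :
    ∃ r ∈ P.roots, w (s - r) ≤ γ := by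
  classical
  have hcard : P.roots.card = P.natDegree := splits_iff_card_roots.1 (IsAlgClosed.splits P)
  have hne : P.roots.toFinset.Nonempty := by
    rw [Multiset.toFinset_nonempty, ← Multiset.card_pos, hcard]
    exact Nat.pos_of_ne_zero hdeg
  obtain ⟨r, hr, hmin⟩ := P.roots.toFinset.exists_min_image (fun r => w (s - r)) hne
  refine ⟨r, Multiset.mem_toFinset.1 hr, (pow_le_pow_iff_left₀ zero_le zero_le hdeg).1 ?_⟩
  calc w (s - r) ^ P.natDegree = w (s - r) ^ (P.roots.map fun r => w (s - r)).card := by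
        rw [Multiset.card_map, hcard]
    _ ≤ (P.roots.map fun r => w (s - r)).prod := Multiset.pow_card_le_prod fun x hx => by
        obtain ⟨r', hr', rfl⟩ := Multiset.mem_map.1 hx
        exact hmin r' (Multiset.mem_toFinset.2 hr')
    _ = w (P.eval s) := by
        rw [valuation_eval_eq_mul_prod_roots, hP.leadingCoeff, map_one, one_mul]
    _ ≤ γ ^ P.natDegree := h

theorem exists_valuation_eval_stable {t : Ω} {P : Polynomial Ω}
    (hP : ∀ r ∈ P.roots, ¬ IsBestApprox w K t r) :
    ∃ c₀ ∈ K, ∀ z, w (t - z) ≤ w (t - c₀) → w (P.eval z) = w (P.eval t) := by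
  obtain ⟨c₀, hc₀, -, hlt⟩ :=
    exists_lt_of_not_isBestApprox P.roots hP K.zero_mem
  refine ⟨c₀, hc₀, fun z hz => ?_⟩
  simp only [valuation_eval_eq_mul_prod_roots]
  congr 2
  refine Multiset.map_congr rfl fun r hr => ?_
  exact valuation_sub_eq_of_lt (hz.trans_lt (hlt r hr))

theorem not_valuation_eval_stable {t : Ω} (hK : ∀ c ∈ K, ¬ IsBestApprox w K t c)
    {P : Polynomial Ω} (hPt : P.eval t ≠ 0) {z : Ω} (hz : z ∈ P.roots)
    (hbest : IsBestApprox w K t z) {c₀ : Ω} (hc₀ : c₀ ∈ K) :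
    ¬ ∀ c ∈ K, w (t - c) ≤ w (t - c₀) → w (P.eval c) = w (P.eval c₀) := by
  classical
  intro hconst
  set B := P.roots.filter (IsBestApprox w K t)
  set N := P.roots.filter fun r => ¬ IsBestApprox w K t r
  have hsplit : P.roots = B + N := (Multiset.filter_add_not _ _).symm
  obtain ⟨c', hc', hc'c₀, hN⟩ :=
    exists_lt_of_not_isBestApprox N (fun r hr => (Multiset.mem_filter.1 hr).2) hc₀
  obtain ⟨c'', hc'', hc''c'⟩ := not_isBestApprox_iff.1 (hK c' hc')
  -- The roots in `B` contribute `w (t - c) ^ B.card`, which strictly decreases as `c`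
  -- approaches `t`, while the other roots contribute a constant.
  have hform : ∀ c ∈ K, w (t - c) ≤ w (t - c') → w (P.eval c) =
      w P.leadingCoeff * (w (t - c) ^ B.card * (N.map fun r => w (t - r)).prod) := by
    intro c hc hcc'
    rw [valuation_eval_eq_mul_prod_roots, hsplit, Multiset.map_add, Multiset.prod_add]
    congr 2
    · rw [Multiset.map_congr rfl (g := fun _ => w (t - c)), Multiset.map_const',
        Multiset.prod_replicate]
      intro r hr
      obtain ⟨c₁, hc₁, hc₁c⟩ := not_isBestApprox_iff.1 (hK c hc)
      rw [w.map_sub_swap]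
      exact valuation_sub_eq_of_lt (((Multiset.mem_filter.1 hr).2 c₁ hc₁).trans_lt hc₁c)
    · exact congrArg _ <| Multiset.map_congr rfl fun r hr =>
        valuation_sub_eq_of_lt (hcc'.trans_lt (hN r hr))
  have hlc : w P.leadingCoeff ≠ 0 :=
    w.ne_zero_iff.2 (leadingCoeff_ne_zero.2 (ne_zero_of_mem_roots hz))
  have hN0 : (N.map fun r => w (t - r)).prod ≠ 0 := by
    refine Multiset.prod_ne_zero fun h0 => ?_
    obtain ⟨r, hr, hr0⟩ := Multiset.mem_map.1 h0
    rw [w.zero_iff, sub_eq_zero] at hr0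
    exact hPt (hr0 ▸ isRoot_of_mem_roots (Multiset.mem_of_mem_filter hr))
  have hB : B.card ≠ 0 := (Multiset.card_pos_iff_exists_mem.2
    ⟨z, Multiset.mem_filter.2 ⟨hz, hbest⟩⟩).ne'
  have heq := (hconst c' hc' hc'c₀).trans (hconst c'' hc'' (hc''c'.le.trans hc'c₀)).symm
  rw [hform c' hc' le_rfl, hform c'' hc'' hc''c'.le, mul_right_inj' hlc, mul_left_inj' hN0] at heq
  exact (pow_lt_pow_left₀ hc''c' zero_le hB).ne' heq

end AlgClosed

section Maximal

variable {Ω Γ : Type*} [Field Ω] [IsAlgClosed Ω] [LinearOrderedCommGroupWithZero Γ]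
  {w : Valuation Ω Γ} {K : Subfield Ω} {t : Ω}

theorem valuation_aeval_eq {Z : Ω} (hZ : IsBestApprox w K t Z) {n : ℕ}
    (hlower : ∀ y, IsIntegral K y → (minpoly K y).natDegree < n → ¬ IsBestApprox w K t y)
    {r : Polynomial K} (hr : r.natDegree < n) : w (aeval Z r) = w (aeval t r) := by
  obtain ⟨c₀, hc₀, hstab⟩ := exists_valuation_eval_stable (P := r.map (algebraMap K Ω))
    fun y hy => hlower y (isIntegral_of_mem_roots_map hy)
      ((natDegree_minpoly_le_of_mem_roots_map hy).trans_lt hr)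
  simpa only [aeval_def, eval₂_eq_eval_map] using hstab Z (hZ c₀ hc₀)

theorem isImmediateExt_adjoin (ht : Transcendental K t)
    (himm : IsImmediateExt w K (Subfield.closure ((K : Set Ω) ∪ {t})))
    {Z : Ω} (hZint : IsIntegral K Z) (hZ : IsBestApprox w K t Z)
    (hlower : ∀ y, IsIntegral K y → (minpoly K y).natDegree < (minpoly K Z).natDegree →
      ¬ IsBestApprox w K t y) :
    IsImmediateExt w K (K⟮Z⟯).toSubfield := by
  constructor
  · intro x hx hx0
    obtain ⟨r, hr, rfl⟩ := exists_aeval_eq_of_mem_adjoin hZint hx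
    have hrt : aeval t r ≠ 0 := fun h => hx0 (by simp [transcendental_iff.1 ht r h])
    obtain ⟨y, hy, hyv⟩ := himm.1 _ (aeval_mem_closure t r) hrt
    exact ⟨y, hy, hyv.trans (valuation_aeval_eq hZ hlower hr).symm⟩
  · intro x hx hx1
    obtain ⟨r, hr, rfl⟩ := exists_aeval_eq_of_mem_adjoin hZint hx
    obtain ⟨y, hy, hyv⟩ :=
      himm.2 _ (aeval_mem_closure t r) ((valuation_aeval_eq hZ hlower hr).symm.trans hx1)
    have hdeg : (r - C (⟨y, hy⟩ : K)).natDegree < (minpoly K Z).natDegree :=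
      (natDegree_sub_le _ _).trans_lt (max_lt hr (by simpa using minpoly.natDegree_pos hZint))
    refine ⟨y, hy, ?_⟩
    have hval := valuation_aeval_eq hZ hlower hdeg
    simp only [map_sub, aeval_C] at hval
    exact hval ▸ hyv

theorem not_isBestApprox_of_isSeparable
    (hmax : ∀ M : Subfield Ω, K ≤ M → (∀ x ∈ M, SepAlgOver K x) →
      IsImmediateExt w K M → M = K)
    (ht : Transcendental K t)
    (himm : IsImmediateExt w K (Subfield.closure ((K : Set Ω) ∪ {t})))
    {Z : Ω} (hZ : IsSeparable K Z)
    (hlower : ∀ y, IsIntegral K y → (minpoly K y).natDegree < (minpoly K Z).natDegree →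
      ¬ IsBestApprox w K t y) :
    ¬ IsBestApprox w K t Z := by
  intro hbest
  have : Algebra.IsSeparable K K⟮Z⟯ := (isSeparable_adjoin_simple_iff_isSeparable K Ω).2 hZ
  have hMK := hmax _ (le_toSubfield_adjoin Z)
    (fun x hx => sepAlgOver_of_isSeparable (isSeparable_of_mem_isSeparable K Ω hx))
    (isImmediateExt_adjoin ht himm hZ.isIntegral hbest hlower)
  have hZK : Z ∈ K := hMK ▸ mem_adjoin_simple_self K Z
  exact not_isBestApprox_of_isImmediateExt (notMem_of_transcendental ht) himm hZK hbest

end Maximal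

section Inseparable

variable {Ω Γ : Type*} [Field Ω] [IsAlgClosed Ω] [LinearOrderedCommGroupWithZero Γ]
  {w : Valuation Ω Γ} {K : Subfield Ω} {t : Ω}

/-- Perturbing the purely inseparable `X ^ p - s ^ p` to the separable `X ^ p + d X - s ^ p`,
with `w (d s) = w (t - s) ^ p`, moves a root by at most `w (t - s)`. -/
theorem exists_isSeparable_isBestApprox {p : ℕ} [Fact p.Prime] [CharP Ω p]
    (ht : Transcendental K t)
    (himm : IsImmediateExt w K (Subfield.closure ((K : Set Ω) ∪ {t})))
    {s : Ω} (hsK : s ^ p ∈ K) (hs : ∀ c ∈ K, w (t - s) < w (t - c)) :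
    ∃ Y, IsSeparable K Y ∧ (minpoly K Y).natDegree ≤ p ∧ IsBestApprox w K t Y := by
  have hp : p.Prime := Fact.out
  obtain ⟨d, hd, hd0, hds⟩ := exists_valuation_mul_eq_valuation_sub_pow ht himm hsK
    (by simpa using hs 0 K.zero_mem)
  set g : Polynomial K := X ^ p + (C ⟨d, hd⟩ * X - C ⟨s ^ p, hsK⟩)
  have hgdeg : g.natDegree = p := natDegree_X_pow_add_C_mul_X_sub_C hp.one_lt _ _
  have hgs : (g.map (algebraMap K Ω)).eval s = d * s := by
    simp only [g, Polynomial.map_add, Polynomial.map_sub, Polynomial.map_mul, Polynomial.map_pow,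
      map_X, map_C, eval_add, eval_sub, eval_mul, eval_pow, eval_X, eval_C]
    change s ^ p + (d * s - s ^ p) = d * s
    ring
  obtain ⟨Y, hY, hYs⟩ := exists_mem_roots_valuation_sub_le
    ((monic_X_pow_add_C_mul_X_sub_C hp.one_lt _ _).map (algebraMap K Ω))
    (by rw [natDegree_map, hgdeg]; exact hp.ne_zero) (by rw [natDegree_map, hgdeg, hgs, hds])
  obtain ⟨hg0, hgY⟩ := ne_zero_and_aeval_eq_zero_of_mem_roots_map hY
  have hdvd := minpoly.dvd K Y hgY
  have hsep : g.Separable :=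
    separable_X_pow_add_C_mul_X_sub_C p (fun h => hd0 (congrArg Subtype.val h)) _
  refine ⟨Y, hsep.of_dvd hdvd, (natDegree_le_of_dvd hdvd hg0).trans hgdeg.le, fun c hc => ?_⟩
  calc w (t - Y) = w ((t - s) + (s - Y)) := by rw [sub_add_sub_cancel]
    _ ≤ w (t - s) := (w.map_add _ _).trans (max_le le_rfl hYs)
    _ ≤ w (t - c) := (hs c hc).le

theorem valuation_pow_sub_lt_of_expand_eq_minpoly {p : ℕ} [Fact p.Prime] [CharP Ω p]
    (ht : Transcendental K t)
    (himm : IsImmediateExt w K (Subfield.closure ((K : Set Ω) ∪ {t})))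
    {z : Ω} (hz : IsIntegral K z) (hbest : IsBestApprox w K t z)
    {m₁ : Polynomial K} (hm₁ : expand K p m₁ = minpoly K z) {C₀ : Ω}
    (hstab : ∀ y, w (t ^ p - y) ≤ w (t ^ p - C₀) →
      w ((m₁.map (algebraMap K Ω)).eval y) = w ((m₁.map (algebraMap K Ω)).eval (t ^ p)))
    {c₀ : Ω} (hc₀ : c₀ ∈ K) :
    w (t ^ p - C₀) < w (t - c₀) ^ p := by
  by_contra! hc₀C₀
  set P := (minpoly K z).map (algebraMap K Ω)
  have hPc : ∀ c, w (t - c) ≤ w (t - c₀) →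
      w (P.eval c) = w ((m₁.map (algebraMap K Ω)).eval (t ^ p)) := by
    intro c hc
    rw [← hstab (c ^ p)]
    · simp only [P, ← hm₁, map_expand, expand_eval]
    · rw [← sub_pow_char, map_pow]
      exact (pow_le_pow_left₀ zero_le hc p).trans hc₀C₀
  have hPt : P.eval t ≠ 0 := by
    rw [eval_map, ← aeval_def]
    exact fun h => minpoly.ne_zero hz (transcendental_iff.1 ht _ h)
  have hzP : z ∈ P.roots :=
    (mem_roots_map (minpoly.ne_zero hz)).2 (by rw [← aeval_def, minpoly.aeval])
  exact not_valuation_eval_stable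
    (fun c hc => not_isBestApprox_of_isImmediateExt (notMem_of_transcendental ht) himm hc)
    hPt hzP hbest hc₀ fun c _ hc => (hPc c hc).trans (hPc c₀ le_rfl).symm

theorem not_isBestApprox_of_expand_eq_minpoly {p : ℕ} [Fact p.Prime] [CharP Ω p]
    (ht : Transcendental K t)
    (himm : IsImmediateExt w K (Subfield.closure ((K : Set Ω) ∪ {t})))
    {z : Ω} (hz : IsIntegral K z) {m₁ : Polynomial K} (hm₁ : expand K p m₁ = minpoly K z)
    (hpow : ∀ y, IsIntegral K y → (minpoly K y).natDegree < (minpoly K z).natDegree →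
      ¬ IsBestApprox w K (t ^ p) y)
    (hsep : ∀ Y, IsSeparable K Y → (minpoly K Y).natDegree ≤ (minpoly K z).natDegree →
      ¬ IsBestApprox w K t Y) :
    ¬ IsBestApprox w K t z := by
  intro hbest
  have hp : p.Prime := Fact.out
  have hdeg : (minpoly K z).natDegree = m₁.natDegree * p := by rw [← hm₁, natDegree_expand]
  have hm₁pos : 0 < m₁.natDegree := by
    have := minpoly.natDegree_pos hz
    rw [hdeg] at this
    exact Nat.pos_of_mul_pos_right this
  have hlt : m₁.natDegree < (minpoly K z).natDegree := by
    rw [hdeg]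
    exact (Nat.lt_mul_iff_one_lt_right hm₁pos).2 hp.one_lt
  obtain ⟨C₀, hC₀, hstab⟩ := exists_valuation_eval_stable (t := t ^ p)
    (P := m₁.map (algebraMap K Ω)) fun y hy => hpow y (isIntegral_of_mem_roots_map hy)
      ((natDegree_minpoly_le_of_mem_roots_map hy).trans_lt hlt)
  obtain ⟨s, rfl⟩ := IsAlgClosed.exists_pow_nat_eq C₀ hp.pos
  have hstrict : ∀ c ∈ K, w (t - s) < w (t - c) := fun c hc =>
    (pow_lt_pow_iff_left₀ zero_le zero_le hp.ne_zero).1 <| by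
      rw [← map_pow, sub_pow_char]
      exact valuation_pow_sub_lt_of_expand_eq_minpoly ht himm hz hbest hm₁ hstab hc
  obtain ⟨Y, hYsep, hYdeg, hY⟩ := exists_isSeparable_isBestApprox ht himm hC₀ hstrict
  exact hsep Y hYsep (hYdeg.trans (hdeg ▸ Nat.le_mul_of_pos_left p hm₁pos)) hY

theorem not_isBestApprox_of_isIntegral
    (hmax : ∀ M : Subfield Ω, K ≤ M → (∀ x ∈ M, SepAlgOver K x) →
      IsImmediateExt w K M → M = K)
    (ht : Transcendental K t)
    (himm : IsImmediateExt w K (Subfield.closure ((K : Set Ω) ∪ {t})))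
    {z : Ω} (hz : IsIntegral K z) :
    ¬ IsBestApprox w K t z := by
  induction hn : (minpoly K z).natDegree using Nat.strong_induction_on generalizing t z with
  | _ n IH =>
  have hlower : ∀ {t'}, Transcendental K t' →
      IsImmediateExt w K (Subfield.closure ((K : Set Ω) ∪ {t'})) →
      ∀ y, IsIntegral K y → (minpoly K y).natDegree < n → ¬ IsBestApprox w K t' y :=
    fun ht' himm' y hy hlt => IH _ hlt ht' himm' hy rfl
  have hsep :
      ∀ Y, IsSeparable K Y → (minpoly K Y).natDegree ≤ n → ¬ IsBestApprox w K t Y :=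
    fun Y hY hYn => not_isBestApprox_of_isSeparable hmax ht himm hY
      fun y hy hlt => hlower ht himm y hy (hlt.trans_le hYn)
  by_cases hzsep : IsSeparable K z
  · exact hsep z hzsep hn.le
  · obtain ⟨p, hp, hchar, m₁, hm₁⟩ := exists_expand_eq_minpoly hz hzsep
    have := Fact.mk hp
    subst hn
    exact not_isBestApprox_of_expand_eq_minpoly ht himm hz hm₁
      (fun y hy hlt => hlower (ht.pow hp.pos)
        (himm.mono (Subfield.closure_union_singleton_pow_le _ t p)) y hy hlt) hsep

end Inseparable

end

/-- Let (K,v) be a separable-algebraically maximal valued field (no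
proper immediate separable-algebraic extensions; formulated inside an algebraically
closed valued field (Ω,w), which suffices since all extensions of v are conjugate)
and (K(t)|K,v) an immediate transcendental extension.  Then the approximation type
of t over K is transcendental: for every polynomial h with coefficients in K there
is α = v(t−c₀) ∈ v(t−K) such that v(h(c)) is constant for all c ∈ K with
v(t−c) ≥ α (multiplicatively: w(t−c) ≤ w(t−c₀)). -/
theorem stmt14 {Ω Γ : Type*} [Field Ω] [IsAlgClosed Ω] [LinearOrderedCommGroupWithZero Γ]
    (w : Valuation Ω Γ) (K : Subfield Ω)
    (hmax : ∀ M : Subfield Ω, K ≤ M → (∀ x ∈ M, SepAlgOver K x) →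
      IsImmediateExt w K M → M = K)  -- K is separable-algebraically maximal
    (t : Ω) (htrans : TransOver K t)
    (himm : IsImmediateExt w K (Subfield.closure ((K : Set Ω) ∪ {t}))) :
    ∀ h : Polynomial Ω, (∀ i, h.coeff i ∈ K) →
      ∃ c₀ ∈ K, ∀ c ∈ K, w (t - c) ≤ w (t - c₀) →
        w (Polynomial.eval c h) = w (Polynomial.eval c₀ h) := by
  intro h hK
  obtain ⟨q, rfl⟩ := exists_map_eq_of_coeff_mem hK
  obtain ⟨c₀, hc₀, hstab⟩ := exists_valuation_eval_stable fun r hr =>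
    not_isBestApprox_of_isIntegral hmax (transcendental_of_transOver htrans) himm
      (isIntegral_of_mem_roots_map hr)
  exact ⟨c₀, hc₀, fun c _ hc => (hstab c hc).trans (hstab c₀ le_rfl).symm⟩
end

section
/- Let (K,v) be a valued field of rank 1 (archimedean value group) and (K(x)|K,v) an immediate transcendental extension. Then the polynomial ring K[x] is dense in the henselization K(x)^h with respect to the valuation topology. -/
/-!
Let `D` be the set of elements of `Ω` that are integral over `M = K(x)` and are limits of elements
of `S = K[x]`, the limits being tested against the values of `K`. Then `D` is a henselian field
containing `M`, so it contains the henselization.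

Two facts drive everything. The value group of an algebraic extension is torsion over that of `M`,
which is the value group of `K` because `M` is immediate; together with the archimedean hypothesis
this gives, for every nonzero `a` integral over `M`, a lower bound `v c ≤ v a` with `c ∈ Kˣ`, and
`v a ^ n → 0` when `v a < 1`. Since the residue field does not grow either, every nonzero `g ∈ K[x]`
is `d (1 - e)` with `d ∈ K` and `v e < 1`, so `g⁻¹` is the limit of the geometric sums
`d⁻¹ ∑ eⁱ`; this makes `D` closed under inverses.

For Hensel's lemma, Newton's iteration started at a simple residue root stays in `D` and
`v (F bₙ) ≤ ε ^ 2 ^ n` with `ε < 1`. As `F` splits in `Ω`, `F bₙ` is the product of the `bₙ - r`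
over the roots `r`, so one root is approached by infinitely many `bₙ`; it lies in `D`.
-/

open Polynomial

section

variable {Ω Γ : Type*} [Field Ω] [LinearOrderedCommGroupWithZero Γ] (w : Valuation Ω Γ)

section ValueGroup

theorem Valuation.exists_ne_le_of_sum_eq_zero {ι : Type*} [DecidableEq ι] {s : Finset ι}
    {t : ι → Ω} {j : ι} (hsum : ∑ i ∈ s, t i = 0) (hj : j ∈ s) (hj0 : w (t j) ≠ 0) :
    ∃ i ∈ s, i ≠ j ∧ w (t j) ≤ w (t i) := by
  by_contra! hlt
  have hrest : ∑ i ∈ s.erase j, t i = -t j :=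
    eq_neg_of_add_eq_zero_right ((Finset.add_sum_erase s t hj).trans hsum)
  have := w.map_sum_lt hj0 fun i hi =>
    hlt i (Finset.mem_of_mem_erase hi) (Finset.ne_of_mem_erase hi)
  rw [hrest, w.map_neg] at this
  exact this.false

theorem Valuation.div_eq_pow_of_mul_pow_eq {a c₁ c₂ : Ω} {i j : ℕ} (hij : i ≤ j) (ha : a ≠ 0)
    (hc₂ : c₂ ≠ 0) (h : w c₁ * w a ^ i = w c₂ * w a ^ j) : w (c₁ / c₂) = w a ^ (j - i) := by
  have h' : w c₁ = w c₂ * w a ^ (j - i) := by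
    refine mul_right_cancel₀ (pow_ne_zero i (w.ne_zero_iff.mpr ha)) ?_
    rw [h, mul_assoc, ← pow_add, Nat.sub_add_cancel hij]
  rw [map_div₀, h', mul_div_cancel_left₀ _ (w.ne_zero_iff.mpr hc₂)]

/-- Two terms of `∑ pᵢ aⁱ = 0` share the maximal value; comparing them expresses a power of `w a`
as the value of a quotient of coefficients. -/
theorem Valuation.exists_pow_eq_of_isIntegral {M : Subfield Ω} {a : Ω} (ha : IsIntegral M a)
    (ha0 : a ≠ 0) : ∃ m, 0 < m ∧ ∃ y ∈ M, y ≠ 0 ∧ w a ^ m = w y := by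
  classical
  obtain ⟨p, hp, hpa⟩ := ha
  set P := p.map M.subtype
  have hPM (i : ℕ) : P.coeff i ∈ M := by simp [P]
  have hsum : ∑ i ∈ Finset.range (P.natDegree + 1), P.coeff i * a ^ i = 0 := by
    rw [← eval_eq_sum_range, eval_map]
    exact hpa
  set t := fun i => P.coeff i * a ^ i
  have hwt (i : ℕ) : w (t i) = w (P.coeff i) * w a ^ i := by simp [t]
  obtain ⟨j, hj, hjmax⟩ := Finset.exists_max_image (Finset.range (P.natDegree + 1))
    (fun i => w (t i)) ⟨_, Finset.self_mem_range_succ _⟩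
  have htop : w (t P.natDegree) ≠ 0 := by
    rw [hwt, (hp.map M.subtype).coeff_natDegree, w.map_one, one_mul]
    exact pow_ne_zero _ (w.ne_zero_iff.mpr ha0)
  have htj : w (t j) ≠ 0 := fun h =>
    htop (le_antisymm (h ▸ hjmax _ (Finset.self_mem_range_succ _)) zero_le)
  obtain ⟨i, hi, hij, hle⟩ := w.exists_ne_le_of_sum_eq_zero hsum hj htj
  have hne {k : ℕ} (hk : w (t k) = w (t j)) : P.coeff k ≠ 0 := fun h0 => htj (by simp [← hk, t, h0])
  have hi0 : P.coeff i ≠ 0 := hne (le_antisymm (hjmax i hi) hle)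
  have hj0 : P.coeff j ≠ 0 := hne rfl
  have heq : w (P.coeff i) * w a ^ i = w (P.coeff j) * w a ^ j := by
    rw [← hwt, ← hwt]
    exact le_antisymm (hjmax i hi) hle
  rcases lt_or_gt_of_ne hij with hlt | hlt
  · exact ⟨j - i, by omega, _, M.div_mem (hPM i) (hPM j), div_ne_zero hi0 hj0,
      (w.div_eq_pow_of_mul_pow_eq hlt.le ha0 hj0 heq).symm⟩
  · exact ⟨i - j, by omega, _, M.div_mem (hPM j) (hPM i), div_ne_zero hj0 hi0,
      (w.div_eq_pow_of_mul_pow_eq hlt.le ha0 hi0 heq.symm).symm⟩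

variable {K M : Subfield Ω}

theorem Valuation.exists_valuation_le_of_isIntegral
    (hval : ∀ e ∈ M, e ≠ 0 → ∃ y ∈ K, w y = w e) {a : Ω} (ha : IsIntegral M a) (ha0 : a ≠ 0) :
    ∃ c ∈ K, c ≠ 0 ∧ w c ≤ w a := by
  rcases le_or_gt 1 (w a) with h1 | h1
  · exact ⟨1, K.one_mem, one_ne_zero, by rwa [w.map_one]⟩
  obtain ⟨m, hm, y, hyM, hy0, hy⟩ := w.exists_pow_eq_of_isIntegral ha ha0
  obtain ⟨c, hcK, hc⟩ := hval y hyM hy0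
  refine ⟨c, hcK, w.ne_zero_iff.mp (hc ▸ w.ne_zero_iff.mpr hy0), ?_⟩
  simpa [hc, ← hy] using pow_le_pow_right_of_le_one' h1.le hm

theorem Valuation.exists_pow_lt_of_isIntegral (hval : ∀ e ∈ M, e ≠ 0 → ∃ y ∈ K, w y = w e)
    (harch : ∀ a ∈ K, ∀ b ∈ K, w a < 1 → b ≠ 0 → ∃ n : ℕ, w a ^ n < w b)
    {a : Ω} (ha : IsIntegral M a) (ha1 : w a < 1) {c : Ω} (hc : c ∈ K) (hc0 : c ≠ 0) :
    ∃ n, w a ^ n < w c := by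
  rcases eq_or_ne a 0 with rfl | ha0
  · exact ⟨1, by simpa using w.pos_iff.mpr hc0⟩
  obtain ⟨m, hm, y, hyM, hy0, hy⟩ := w.exists_pow_eq_of_isIntegral ha ha0
  obtain ⟨b, hbK, hb⟩ := hval y hyM hy0
  have hb1 : w b < 1 := by
    rw [hb, ← hy]
    exact pow_lt_one' ha1 hm.ne'
  obtain ⟨n, hn⟩ := harch b hbK c hc hb1 hc0
  exact ⟨m * n, by rwa [pow_mul, hy, ← hb]⟩

theorem Valuation.exists_valuation_ge_of_mem (hval : ∀ e ∈ M, e ≠ 0 → ∃ y ∈ K, w y = w e)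
    {b : Ω} (hb : b ∈ M) : ∃ c ∈ K, c ≠ 0 ∧ w b ≤ w c := by
  rcases eq_or_ne b 0 with rfl | hb0
  · exact ⟨1, K.one_mem, one_ne_zero, by simp⟩
  obtain ⟨c, hcK, hc⟩ := hval b hb hb0
  exact ⟨c, hcK, w.ne_zero_iff.mp (hc ▸ w.ne_zero_iff.mpr hb0), hc.ge⟩

theorem IsImmediateExt.exists_one_sub_div_lt {w : Valuation Ω Γ} (himm : IsImmediateExt w K M)
    (hKM : K ≤ M) {b : Ω} (hb : b ∈ M) (hb0 : b ≠ 0) : ∃ d ∈ K, d ≠ 0 ∧ w (1 - b / d) < 1 := by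
  obtain ⟨y, hyK, hy⟩ := himm.1 b hb hb0
  have hy0 : y ≠ 0 := w.ne_zero_iff.mp (hy ▸ w.ne_zero_iff.mpr hb0)
  have hu : w (b / y) = 1 := by rw [map_div₀, hy, div_self (w.ne_zero_iff.mpr hb0)]
  obtain ⟨z, hzK, hz⟩ := himm.2 (b / y) (M.div_mem hb (hKM hyK)) hu
  have hz1 : w z = 1 := (w.map_eq_of_sub_lt (by rwa [w.map_sub_swap, hu])).trans hu
  have hz0 : z ≠ 0 := w.ne_zero_iff.mp (by simp [hz1])
  refine ⟨y * z, K.mul_mem hyK hzK, mul_ne_zero hy0 hz0, ?_⟩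
  rw [show 1 - b / (y * z) = (z - b / y) / z by field_simp, map_div₀, hz1, div_one,
    w.map_sub_swap]
  exact hz

end ValueGroup

section Polynomial

theorem Polynomial.eval_mem_of_coeff_mem {R A : Type*} [CommRing R] [SetLike A R]
    [SubringClass A R] {s : A} {F : Polynomial R} (hF : ∀ i, F.coeff i ∈ s) {b : R}
    (hb : b ∈ s) : F.eval b ∈ s := by
  rw [eval_eq_sum_range]
  exact sum_mem fun i _ => mul_mem (hF i) (pow_mem hb i)

theorem Polynomial.newtonMap_mem {D : Subfield Ω} {F : Polynomial Ω} (hF : ∀ i, F.coeff i ∈ D)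
    {b : Ω} (hb : b ∈ D) : F.newtonMap b ∈ D := by
  have hF' (i : ℕ) : F.derivative.coeff i ∈ D := by
    rw [coeff_derivative]
    exact D.mul_mem (hF _) (D.add_mem (natCast_mem D i) D.one_mem)
  rw [newtonMap_apply]
  simpa using D.sub_mem hb (D.mul_mem (D.inv_mem (eval_mem_of_coeff_mem hF' hb))
    (eval_mem_of_coeff_mem hF hb))

theorem IsIntegral.of_eval_eq_zero {M : Subfield Ω} {F : Polynomial Ω} (hF : F.Monic)
    (hc : ∀ i, IsIntegral M (F.coeff i)) {r : Ω} (hr : F.eval r = 0) : IsIntegral M r := by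
  obtain ⟨q, hqF, -, hq⟩ := lifts_and_degree_eq_and_monic
    ((lifts_iff_coeff_lifts F).mpr fun i => ⟨⟨_, hc i⟩, rfl⟩ :
      F ∈ lifts (algebraMap (integralClosure M Ω) Ω)) hF
  exact isIntegral_trans r ⟨q, hq, by rw [← eval_map, hqF, hr]⟩

variable {F : Polynomial Ω}

theorem Valuation.eval_le_one (hF : ∀ i, w (F.coeff i) ≤ 1) {s : Ω} (hs : w s ≤ 1) :
    w (F.eval s) ≤ 1 := by
  rw [eval_eq_sum_range]
  refine w.map_sum_le fun i _ => ?_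
  rw [w.map_mul, w.map_pow]
  exact mul_le_one' (hF i) (pow_le_one' hs i)

theorem Valuation.derivative_coeff_le_one (hF : ∀ i, w (F.coeff i) ≤ 1) (i : ℕ) :
    w (F.derivative.coeff i) ≤ 1 := by
  rw [coeff_derivative, w.map_mul, show (i : Ω) + 1 = (i + 1 : ℕ) by push_cast; rfl]
  exact mul_le_one' (hF _) (natCast_mem w.integer _)

theorem Valuation.exists_eval_add_eq (hF : ∀ i, w (F.coeff i) ≤ 1) {s t : Ω} (hs : w s ≤ 1)
    (ht : w t ≤ 1) :
    ∃ k, w k ≤ 1 ∧ F.eval (s + t) = F.eval s + F.derivative.eval s * t + k * t ^ 2 := by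
  obtain ⟨F₀, rfl⟩ : F ∈ lifts w.integer.subtype :=
    (lifts_iff_coeff_lifts F).mpr fun n => ⟨⟨_, hF n⟩, rfl⟩
  obtain ⟨k, hk⟩ := F₀.binomExpansion ⟨s, hs⟩ ⟨t, ht⟩
  refine ⟨k, k.2, ?_⟩
  have := congrArg w.integer.subtype hk
  simp only [map_add, map_mul, map_pow, ← eval_map_apply, ← derivative_map] at this
  exact this

theorem Valuation.newtonMap_spec (hF : ∀ i, w (F.coeff i) ≤ 1) {b : Ω} (hb : w b ≤ 1)
    (hF'b : w (F.derivative.eval b) = 1) (hFb : w (F.eval b) < 1) :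
    w (F.newtonMap b - b) = w (F.eval b) ∧ w (F.eval (F.newtonMap b)) ≤ w (F.eval b) ^ 2 ∧
      w (F.derivative.eval (F.newtonMap b)) = 1 := by
  set h := -(F.eval b / F.derivative.eval b)
  have hF'b0 : F.derivative.eval b ≠ 0 := w.ne_zero_iff.mp (by simp [hF'b])
  have hnewton : F.newtonMap b = b + h := by
    simp [h, newtonMap_apply, div_eq_inv_mul, sub_eq_add_neg]
  have hwh : w h = w (F.eval b) := by simp [h, hF'b]
  have hh1 : w h < 1 := hwh ▸ hFb
  obtain ⟨k, hk, hFk⟩ := w.exists_eval_add_eq hF hb hh1.le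
  obtain ⟨k', hk', hF'k⟩ := w.exists_eval_add_eq (w.derivative_coeff_le_one hF) hb hh1.le
  have hF''b := w.eval_le_one (w.derivative_coeff_le_one (w.derivative_coeff_le_one hF)) hb
  rw [hnewton, add_sub_cancel_left]
  refine ⟨hwh, ?_, ?_⟩
  · have : F.eval (b + h) = k * h ^ 2 := by
      rw [hFk, mul_neg, mul_div_cancel₀ _ hF'b0, add_neg_cancel, zero_add]
    rw [this, w.map_mul, w.map_pow, hwh]
    exact mul_le_of_le_one_left' hk
  · have hsmall : w (F.derivative.derivative.eval b * h + k' * h ^ 2) < 1 := by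
      refine (w.map_add _ _).trans_lt (max_lt ?_ ?_)
      · rw [w.map_mul]
        exact (mul_le_of_le_one_left' hF''b).trans_lt hh1
      · rw [w.map_mul, w.map_pow]
        exact (mul_le_of_le_one_left' hk').trans_lt (pow_lt_one' hh1 two_ne_zero)
    rw [hF'k, add_assoc, w.map_add_eq_of_lt_left (hF'b ▸ hsmall), hF'b]

theorem Valuation.newtonMap_iterate_spec (hF : ∀ i, w (F.coeff i) ≤ 1) {a₀ : Ω} (ha₀ : w a₀ ≤ 1)
    (hF'a₀ : w (F.derivative.eval a₀) = 1) (hFa₀ : w (F.eval a₀) < 1) (n : ℕ) :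
    w (F.newtonMap^[n] a₀ - a₀) < 1 ∧ w (F.derivative.eval (F.newtonMap^[n] a₀)) = 1 ∧
      w (F.eval (F.newtonMap^[n] a₀)) ≤ w (F.eval a₀) ^ 2 ^ n := by
  induction n with
  | zero => simp [hF'a₀]
  | succ n ih =>
    obtain ⟨hba₀, hF'b, hFb⟩ := ih
    set b := F.newtonMap^[n] a₀
    have hFb1 : w (F.eval b) < 1 :=
      hFb.trans_lt (pow_lt_one' hFa₀ (pow_ne_zero n two_ne_zero))
    have hb1 : w b ≤ 1 := by
      simpa using (w.map_add (b - a₀) a₀).trans (max_le hba₀.le ha₀)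
    obtain ⟨hstep, hFnext, hF'next⟩ := w.newtonMap_spec hF hb1 hF'b hFb1
    rw [Function.iterate_succ_apply']
    refine ⟨?_, hF'next, ?_⟩
    · rw [← sub_add_sub_cancel _ b]
      exact (w.map_add _ _).trans_lt (max_lt (hstep ▸ hFb1) hba₀)
    · rw [pow_succ, pow_mul]
      exact hFnext.trans (pow_le_pow_left' hFb 2)

theorem Valuation.exists_root_pow_natDegree_le [IsAlgClosed Ω] (hF : F.Monic)
    (hdeg : F.natDegree ≠ 0) (u : Ω) :
    ∃ r ∈ F.roots, w (u - r) ^ F.natDegree ≤ w (F.eval u) := by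
  have hroots : F.roots ≠ 0 := by
    rw [← Multiset.card_pos, IsAlgClosed.card_roots_eq_natDegree]
    exact Nat.pos_of_ne_zero hdeg
  obtain ⟨r, hr, hmin⟩ := Multiset.exists_min_image (fun r => w (u - r)) hroots
  refine ⟨r, hr, ?_⟩
  rw [(IsAlgClosed.splits F).eval_eq_prod_roots_of_monic hF, map_multiset_prod, Multiset.map_map,
    ← IsAlgClosed.card_roots_eq_natDegree, ← Multiset.card_map (fun r => w (u - r))]
  refine Multiset.pow_card_le_prod fun _ hv => ?_
  obtain ⟨r', hr', rfl⟩ := Multiset.mem_map.mp hv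
  exact hmin r' hr'

theorem Valuation.exists_root_frequently_pow_natDegree_le [IsAlgClosed Ω] (hF : F.Monic)
    (hdeg : F.natDegree ≠ 0) (b : ℕ → Ω) :
    ∃ r, F.eval r = 0 ∧
      ∃ᶠ n in Filter.atTop, w (b n - r) ^ F.natDegree ≤ w (F.eval (b n)) := by
  classical
  choose φ hφ using fun n =>
    let ⟨r, hr, h⟩ := w.exists_root_pow_natDegree_le hF hdeg (b n)
    (⟨⟨r, Multiset.mem_toFinset.mpr hr⟩, h⟩ :
      ∃ r : F.roots.toFinset, w (b n - r) ^ F.natDegree ≤ w (F.eval (b n)))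
  obtain ⟨r, hr⟩ := Finite.exists_infinite_fiber φ
  refine ⟨r, (mem_roots'.mp (Multiset.mem_toFinset.mp r.2)).2, ?_⟩
  refine Nat.frequently_atTop_iff_infinite.mpr ((Set.infinite_coe_iff.mp hr).mono fun n hn => ?_)
  simpa [← (Set.mem_singleton_iff.mp hn : φ n = r)] using hφ n

end Polynomial

theorem Subfield.isHenselian_of_exists_root (D : Subfield Ω)
    (h : ∀ F : Polynomial Ω, F.Monic → (∀ i, F.coeff i ∈ D) → (∀ i, w (F.coeff i) ≤ 1) →
      ∀ a₀ ∈ D, w a₀ ≤ 1 → w (F.eval a₀) < 1 → w (F.derivative.eval a₀) = 1 →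
        ∃ r ∈ D, F.eval r = 0 ∧ w (r - a₀) < 1) :
    Subfield.IsHenselian w D := by
  set v := w.comap D.subtype
  set ι : v.valuationSubring →+* Ω := D.subtype.comp v.valuationSubring.subtype
  have ι_injective : Function.Injective ι := fun a b hab => Subtype.ext (Subtype.ext hab)
  have isUnit_iff (a : v.valuationSubring) : IsUnit a ↔ w (ι a) = 1 := by
    rw [← not_iff_not, ← mem_nonunits_iff, ← IsLocalRing.mem_maximalIdeal,
      Valuation.mem_maximalIdeal_iff]
    exact ⟨ne_of_lt, lt_of_le_of_ne a.2⟩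
  have eval_ι (f : v.valuationSubring[X]) (a) : (f.map ι).eval (ι a) = ι (f.eval a) :=
    (eval_map _ _).trans (eval₂_at_apply ι a)
  refine { is_henselian := fun f hf a₀ h₀ h₁ => ?_ }
  rw [Valuation.mem_maximalIdeal_iff] at h₀
  rw [isUnit_iff] at h₁
  obtain ⟨r, hrD, hr, hra₀⟩ := h (f.map ι) (hf.map ι) (fun i => by simp [ι])
    (fun i => by rw [coeff_map]; exact (f.coeff i).2) (ι a₀) (by simp [ι]) a₀.2
    (by rw [eval_ι]; exact h₀) (by rw [derivative_map, eval_ι]; exact h₁)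
  have hr1 : w r ≤ 1 := by
    simpa using w.map_add_le hra₀.le (show w (ι a₀) ≤ 1 from a₀.2)
  refine ⟨⟨⟨r, hrD⟩, hr1⟩, ι_injective ?_, ?_⟩
  · rw [map_zero, ← eval_ι]
    exact hr
  · rw [Valuation.mem_maximalIdeal_iff]
    exact hra₀

/-- `a` is in the closure of `S` for the valuation topology, tested against the values of `K`. -/
def IsApproximable (K : Subfield Ω) (S : Subring Ω) (a : Ω) : Prop :=
  ∀ c ∈ K, c ≠ 0 → ∃ b ∈ S, w (a - b) < w c

variable {K M : Subfield Ω} {S : Subring Ω}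

namespace IsApproximable

variable {w} {a b : Ω}

theorem of_mem (ha : a ∈ S) : IsApproximable w K S a :=
  fun _ _ hc0 => ⟨a, ha, by simpa using w.pos_iff.mpr hc0⟩

theorem of_forall_exists_sub_lt
    (h : ∀ c ∈ K, c ≠ 0 → ∃ b, IsApproximable w K S b ∧ w (a - b) < w c) :
    IsApproximable w K S a := by
  intro c hc hc0
  obtain ⟨b, hb, hab⟩ := h c hc hc0
  obtain ⟨b', hb'S, hbb'⟩ := hb c hc hc0
  refine ⟨b', hb'S, ?_⟩
  rw [← sub_add_sub_cancel a b b']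
  exact (w.map_add _ _).trans_lt (max_lt hab hbb')

theorem add (ha : IsApproximable w K S a) (hb : IsApproximable w K S b) :
    IsApproximable w K S (a + b) := by
  intro c hc hc0
  obtain ⟨a', ha'S, haa'⟩ := ha c hc hc0
  obtain ⟨b', hb'S, hbb'⟩ := hb c hc hc0
  refine ⟨a' + b', S.add_mem ha'S hb'S, ?_⟩
  rw [add_sub_add_comm]
  exact (w.map_add _ _).trans_lt (max_lt haa' hbb')

theorem neg (ha : IsApproximable w K S a) : IsApproximable w K S (-a) := by
  intro c hc hc0
  obtain ⟨a', ha'S, haa'⟩ := ha c hc hc0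
  exact ⟨-a', S.neg_mem ha'S, by rwa [neg_sub_neg, w.map_sub_swap]⟩

theorem exists_valuation_ge (hS : ∀ b ∈ S, ∃ c ∈ K, c ≠ 0 ∧ w b ≤ w c)
    (ha : IsApproximable w K S a) :
    ∃ c ∈ K, c ≠ 0 ∧ w a ≤ w c := by
  obtain ⟨b, hbS, hab⟩ := ha 1 K.one_mem one_ne_zero
  obtain ⟨c, hcK, hc0, hbc⟩ := hS b hbS
  have hle : w a ≤ max 1 (w c) := by
    rw [← sub_add_cancel a b, ← w.map_one]
    exact (w.map_add _ _).trans (max_le_max hab.le hbc)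
  rcases le_total 1 (w c) with h | h
  · exact ⟨c, hcK, hc0, by rwa [max_eq_right h] at hle⟩
  · exact ⟨1, K.one_mem, one_ne_zero, by rwa [max_eq_left h, ← w.map_one] at hle⟩

theorem mul (hS : ∀ b ∈ S, ∃ c ∈ K, c ≠ 0 ∧ w b ≤ w c) (ha : IsApproximable w K S a)
    (hb : IsApproximable w K S b) : IsApproximable w K S (a * b) := by
  intro c hc hc0
  obtain ⟨A, hAK, hA0, hA⟩ := ha.exists_valuation_ge hS
  obtain ⟨b', hb'S, hbb'⟩ := hb (c / A) (K.div_mem hc hAK) (div_ne_zero hc0 hA0)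
  obtain ⟨B, hBK, hB0, hB⟩ := hS b' hb'S
  obtain ⟨a', ha'S, haa'⟩ := ha (c / B) (K.div_mem hc hBK) (div_ne_zero hc0 hB0)
  refine ⟨a' * b', S.mul_mem ha'S hb'S, ?_⟩
  have hwA : w A ≠ 0 := w.ne_zero_iff.mpr hA0
  have hwB : w B ≠ 0 := w.ne_zero_iff.mpr hB0
  rw [show a * b - a' * b' = a * (b - b') + (a - a') * b' by ring]
  refine (w.map_add _ _).trans_lt (max_lt ?_ ?_)
  · calc w (a * (b - b')) = w a * w (b - b') := w.map_mul _ _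
      _ < w A * w (c / A) :=
        mul_lt_mul_of_le_of_lt_of_nonneg_of_pos hA hbb' zero_le (zero_lt_iff.mpr hwA)
      _ = w c := by rw [map_div₀, mul_div_cancel₀ _ hwA]
  · calc w ((a - a') * b') = w b' * w (a - a') := by rw [w.map_mul, mul_comm]
      _ < w B * w (c / B) :=
        mul_lt_mul_of_le_of_lt_of_nonneg_of_pos hB haa' zero_le (zero_lt_iff.mpr hwB)
      _ = w c := by rw [map_div₀, mul_div_cancel₀ _ hwB]

theorem inv (hS : ∀ b ∈ S, b ≠ 0 → IsApproximable w K S b⁻¹) (ha : IsApproximable w K S a)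
    {c₀ : Ω} (hc₀ : c₀ ∈ K) (hc₀0 : c₀ ≠ 0) (hc₀a : w c₀ ≤ w a) :
    IsApproximable w K S a⁻¹ := by
  refine of_forall_exists_sub_lt fun c hc hc0 => ?_
  obtain ⟨d, hdK, hd0, hdc, hdc₀⟩ : ∃ d ∈ K, d ≠ 0 ∧ w d ≤ w (c * c₀ * c₀) ∧ w d ≤ w c₀ := by
    rcases le_total (w (c * c₀ * c₀)) (w c₀) with h | h
    · exact ⟨_, K.mul_mem (K.mul_mem hc hc₀) hc₀, by simp [hc0, hc₀0], le_rfl, h⟩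
    · exact ⟨c₀, hc₀, hc₀0, h, le_rfl⟩
  obtain ⟨b, hbS, hab⟩ := ha d hdK hd0
  have hwa : 0 < w a := (w.pos_iff.mpr hc₀0).trans_le hc₀a
  have hwb : w b = w a :=
    w.map_eq_of_sub_lt (by rw [w.map_sub_swap]; exact hab.trans_le (hdc₀.trans hc₀a))
  have hb0 : b ≠ 0 := w.ne_zero_iff.mp (hwb ▸ hwa.ne')
  refine ⟨b⁻¹, hS b hbS hb0, ?_⟩
  have hab' : w (a - b) < w c * (w a * w a) :=
    calc w (a - b) < w (c * c₀ * c₀) := hab.trans_le hdc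
      _ ≤ w c * (w a * w a) := by
        rw [w.map_mul, w.map_mul, mul_assoc]; exact mul_le_mul' le_rfl (mul_le_mul' hc₀a hc₀a)
  rw [inv_sub_inv (w.ne_zero_iff.mp hwa.ne') hb0, map_div₀, w.map_sub_swap, w.map_mul, hwb]
  exact (div_lt_iff₀ (mul_pos hwa hwa)).mpr hab'

end IsApproximable

variable {w}

theorem isApproximable_inv_of_mem (hKS : K.toSubring ≤ S) (hSM : S ≤ M.toSubring)
    (himm : IsImmediateExt w K M)
    (harch : ∀ a ∈ K, ∀ b ∈ K, w a < 1 → b ≠ 0 → ∃ n : ℕ, w a ^ n < w b)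
    {b : Ω} (hb : b ∈ S) (hb0 : b ≠ 0) : IsApproximable w K S b⁻¹ := by
  obtain ⟨d, hdK, hd0, he⟩ := himm.exists_one_sub_div_lt (fun _ hy => hSM (hKS hy)) (hSM hb) hb0
  obtain ⟨e, rfl⟩ : ∃ e, b = d * (1 - e) := ⟨1 - b / d, by field_simp; ring⟩
  rw [mul_div_cancel_left₀ _ hd0, sub_sub_cancel] at he
  have hd' : d⁻¹ ∈ S := hKS (K.inv_mem hdK)
  have heS : e ∈ S := by simpa [hd0] using S.sub_mem S.one_mem (S.mul_mem hd' hb)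
  intro c hc hc0
  obtain ⟨n, hn⟩ := w.exists_pow_lt_of_isIntegral himm.1 harch
    (isIntegral_algebraMap (x := (⟨e, hSM heS⟩ : M))) he (K.mul_mem hc hdK) (mul_ne_zero hc0 hd0)
  refine ⟨d⁻¹ * ∑ i ∈ Finset.range n, e ^ i,
    S.mul_mem hd' (S.sum_mem fun i _ => S.pow_mem heS i), ?_⟩
  have h1e : 1 - e ≠ 0 := right_ne_zero_of_mul hb0
  have hgeom : (d * (1 - e))⁻¹ - d⁻¹ * ∑ i ∈ Finset.range n, e ^ i = (d * (1 - e))⁻¹ * e ^ n := by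
    field_simp
    linear_combination -mul_neg_geom_sum e n
  rw [hgeom, w.map_mul, map_inv₀, w.map_mul, w.map_one_sub_of_lt he, mul_one, w.map_pow,
    inv_mul_lt_iff₀ (w.pos_iff.mpr hd0), mul_comm, ← w.map_mul]
  exact hn

def approximableSubfield (hKS : K.toSubring ≤ S) (hSM : S ≤ M.toSubring)
    (himm : IsImmediateExt w K M)
    (harch : ∀ a ∈ K, ∀ b ∈ K, w a < 1 → b ≠ 0 → ∃ n : ℕ, w a ^ n < w b) : Subfield Ω where
  carrier := {a | IsApproximable w K S a ∧ IsIntegral M a}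
  zero_mem' := ⟨.of_mem S.zero_mem, isIntegral_zero⟩
  one_mem' := ⟨.of_mem S.one_mem, isIntegral_one⟩
  add_mem' ha hb := ⟨ha.1.add hb.1, ha.2.add hb.2⟩
  neg_mem' ha := ⟨ha.1.neg, ha.2.neg⟩
  mul_mem' ha hb :=
    ⟨ha.1.mul (fun _ hb => w.exists_valuation_ge_of_mem himm.1 (hSM hb)) hb.1, ha.2.mul hb.2⟩
  inv_mem' a ha := by
    rcases eq_or_ne a 0 with rfl | ha0
    · simpa using ⟨IsApproximable.of_mem (w := w) (K := K) S.zero_mem, isIntegral_zero⟩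
    obtain ⟨c₀, hc₀, hc₀0, hc₀a⟩ := w.exists_valuation_le_of_isIntegral himm.1 ha.2 ha0
    exact ⟨ha.1.inv (fun _ hb hb0 => isApproximable_inv_of_mem hKS hSM himm harch hb hb0)
      hc₀ hc₀0 hc₀a, ha.2.inv⟩

section

variable (hKS : K.toSubring ≤ S) (hSM : S ≤ M.toSubring) (himm : IsImmediateExt w K M)
  (harch : ∀ a ∈ K, ∀ b ∈ K, w a < 1 → b ≠ 0 → ∃ n : ℕ, w a ^ n < w b)

theorem le_approximableSubfield : S ≤ (approximableSubfield hKS hSM himm harch).toSubring :=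
  fun b hb => ⟨.of_mem hb, isIntegral_algebraMap (x := (⟨b, hSM hb⟩ : M))⟩

theorem exists_root_mem_approximableSubfield [IsAlgClosed Ω] {F : Polynomial Ω} (hF : F.Monic)
    (hFD : ∀ i, F.coeff i ∈ approximableSubfield hKS hSM himm harch)
    (hF1 : ∀ i, w (F.coeff i) ≤ 1) {a₀ : Ω} (ha₀D : a₀ ∈ approximableSubfield hKS hSM himm harch)
    (ha₀ : w a₀ ≤ 1) (hFa₀ : w (F.eval a₀) < 1) (hF'a₀ : w (F.derivative.eval a₀) = 1) :
    ∃ r ∈ approximableSubfield hKS hSM himm harch, F.eval r = 0 ∧ w (r - a₀) < 1 := by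
  set b := fun n => F.newtonMap^[n] a₀
  have hbD (n : ℕ) : b n ∈ approximableSubfield hKS hSM himm harch :=
    Set.MapsTo.iterate (fun _ => newtonMap_mem hFD) n ha₀D
  have hspec := w.newtonMap_iterate_spec hF1 ha₀ hF'a₀ hFa₀
  have hdeg : F.natDegree ≠ 0 := by
    intro h
    rw [hF.natDegree_eq_zero.mp h] at hFa₀
    simp at hFa₀
  obtain ⟨r, hr, hfreq⟩ := w.exists_root_frequently_pow_natDegree_le hF hdeg b
  have hnear : ∀ c ∈ K, c ≠ 0 → ∃ n, w (r - b n) < w c := by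
    intro c hc hc0
    obtain ⟨N, hN⟩ := w.exists_pow_lt_of_isIntegral himm.1 harch
      (eval_mem_of_coeff_mem hFD ha₀D).2 hFa₀ (K.pow_mem hc F.natDegree) (pow_ne_zero _ hc0)
    have hev : ∀ᶠ n in Filter.atTop, w (F.eval a₀) ^ 2 ^ n < w c ^ F.natDegree :=
      Filter.eventually_atTop.2 ⟨N, fun n hn => (pow_le_pow_right_of_le_one' hFa₀.le
        (hn.trans Nat.lt_two_pow_self.le)).trans_lt (hN.trans_eq (w.map_pow _ _))⟩
    obtain ⟨n, hn, hn'⟩ := (hfreq.and_eventually hev).exists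
    refine ⟨n, ?_⟩
    rw [w.map_sub_swap]
    exact lt_of_pow_lt_pow_left' _ (hn.trans_lt ((hspec n).2.2.trans_lt hn'))
  refine ⟨r, ⟨IsApproximable.of_forall_exists_sub_lt fun c hc hc0 => ?_, ?_⟩, hr, ?_⟩
  · obtain ⟨n, hn⟩ := hnear c hc hc0
    exact ⟨b n, (hbD n).1, hn⟩
  · exact IsIntegral.of_eval_eq_zero hF (fun i => (hFD i).2) hr
  · obtain ⟨n, hn⟩ := hnear 1 K.one_mem one_ne_zero
    rw [← sub_add_sub_cancel r (b n)]
    exact (w.map_add _ _).trans_lt (max_lt (by simpa using hn) (hspec n).1)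

theorem isHenselian_approximableSubfield [IsAlgClosed Ω] :
    Subfield.IsHenselian w (approximableSubfield hKS hSM himm harch) :=
  Subfield.isHenselian_of_exists_root w _ fun _ hF hFD hF1 _ ha₀D ha₀ hFa₀ hF'a₀ =>
    exists_root_mem_approximableSubfield hKS hSM himm harch hF hFD hF1 ha₀D ha₀ hFa₀ hF'a₀

end

theorem Subfield.toSubring_le_adjoin (K : Subfield Ω) (x : Ω) :
    K.toSubring ≤ (Algebra.adjoin K {x}).toSubring :=
  fun y hy => (Algebra.adjoin K {x}).algebraMap_mem ⟨y, hy⟩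

theorem Subfield.adjoin_le_closure (K : Subfield Ω) (x : Ω) :
    (Algebra.adjoin K {x}).toSubring ≤ (Subfield.closure ((K : Set Ω) ∪ {x})).toSubring := by
  rw [Algebra.adjoin_eq_ring_closure, Subring.closure_le]
  rintro _ (⟨y, rfl⟩ | rfl)
  exacts [Subfield.subset_closure (Or.inl y.2), Subfield.subset_closure (Or.inr rfl)]

theorem Subfield.exists_eval_eq_of_mem_adjoin {K : Subfield Ω} {x b : Ω}
    (hb : b ∈ Algebra.adjoin K {x}) :
    ∃ f : Polynomial Ω, (∀ i, f.coeff i ∈ K) ∧ f.eval x = b := by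
  rw [Algebra.adjoin_singleton_eq_range_aeval] at hb
  obtain ⟨p, rfl⟩ := hb
  exact ⟨p.map K.subtype, fun i => by simp, by rw [eval_map]; rfl⟩

end

theorem stmt17_general {Ω Γ : Type*} [Field Ω] [IsAlgClosed Ω] [LinearOrderedCommGroupWithZero Γ]
    (w : Valuation Ω Γ) (K : Subfield Ω)
    (harch : ∀ a ∈ K, ∀ b ∈ K, w a < 1 → b ≠ 0 → ∃ n : ℕ, w a ^ n < w b)  -- rank 1
    (x : Ω)
    (himm : IsImmediateExt w K (Subfield.closure ((K : Set Ω) ∪ {x}))) :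
    ∀ a ∈ henselization w (Subfield.closure ((K : Set Ω) ∪ {x})),
      ∀ c ∈ K, c ≠ 0 → ∃ f : Polynomial Ω,
        (∀ i, f.coeff i ∈ K) ∧ w (a - Polynomial.eval x f) < w c := by
  intro a ha c hc hc0
  have hKS := K.toSubring_le_adjoin x
  have hSM := K.adjoin_le_closure x
  have hSD := le_approximableSubfield hKS hSM himm harch
  have hMD : Subfield.closure ((K : Set Ω) ∪ {x}) ≤ approximableSubfield hKS hSM himm harch :=
    Subfield.closure_le.mpr <| Set.union_subset (fun y hy => hSD (hKS hy))
      (Set.singleton_subset_iff.mpr (hSD (Algebra.self_mem_adjoin_singleton K x)))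
  have hle : henselization w _ ≤ approximableSubfield hKS hSM himm harch :=
    sInf_le ⟨hMD, isHenselian_approximableSubfield hKS hSM himm harch⟩
  obtain ⟨b, hbS, hab⟩ := (hle ha).1 c hc hc0
  obtain ⟨f, hfK, rfl⟩ := Subfield.exists_eval_eq_of_mem_adjoin hbS
  exact ⟨f, hfK, hab⟩

/-- Let (K,v) be a valued field of rank 1 (nontrivial archimedean
value group) and (K(x)|K,v) an immediate transcendental extension.  Then K[x] is
dense in the henselization K(x)^h: for every a ∈ K(x)^h and every value γ = v(c)
with c ∈ K, c ≠ 0, there is f(x) ∈ K[x] with v(a − f(x)) > γ. -/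
theorem stmt17 {Ω Γ : Type*} [Field Ω] [IsAlgClosed Ω] [LinearOrderedCommGroupWithZero Γ]
    (w : Valuation Ω Γ) (K : Subfield Ω)
    (hnontriv : ∃ a ∈ K, a ≠ 0 ∧ w a ≠ 1)
    (harch : ∀ a ∈ K, ∀ b ∈ K, w a < 1 → b ≠ 0 → ∃ n : ℕ, w a ^ n < w b)  -- rank 1
    (x : Ω) (htrans : TransOver K x)
    (himm : IsImmediateExt w K (Subfield.closure ((K : Set Ω) ∪ {x}))) :
    ∀ a ∈ henselization w (Subfield.closure ((K : Set Ω) ∪ {x})),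
      ∀ c ∈ K, c ≠ 0 → ∃ f : Polynomial Ω,
        (∀ i, f.coeff i ∈ K) ∧ w (a - Polynomial.eval x f) < w c :=
  stmt17_general w K harch x himm
end

section
/- Let (F|K,v) be a valued function field such that vF/vK is a torsion group and Fv|Kv is algebraic, with v extended to the algebraic closure of F. Then the extension (F.К̃ | K̃, v) of F composited with the algebraic closure K̃ of K is an immediate valued function field: v(F.K̃) = vK̃ and (F.K̃)v = K̃v. -/
/-- x is algebraic over the subfield M. -/
def AlgOver {Ω : Type*} [Field Ω] (M : Subfield Ω) (x : Ω) : Prop :=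
  ∃ f : Polynomial Ω, f ≠ 0 ∧ (∀ i, f.coeff i ∈ M) ∧ Polynomial.eval x f = 0

/-!
Both halves hold for every `x ∈ Ω`, because `Ω` is algebraic over `F`.

Values: in a relation `f(x) = 0` over `F` two terms of maximal value coincide, so some power
of `w x` is a value of `F`, hence by the torsion hypothesis a value `w y` with `y ∈ K`; a root
`u` of `X ^ m - y` is then algebraic over `K` with `w u = w x`.

Residues: over the algebraically closed `Ω`, a monic `Q` with `w (Q x) < 1` has a root `b`
with `w (x - b) < 1`, since `w (Q x)` is the product of the `w (x - b)`. Dividing a relation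
`f(x) = 0` over `F` by its last coefficient of maximal value and dropping the higher terms gives
a monic `p` over `F ∩ O` with `w (p x) < 1`. By the residue hypothesis and the root argument,
each coefficient of `p` lies within distance `< 1` of an element of `K̃`; the resulting monic `q`
over `K̃` still has `w (q x) < 1`, so `x` is close to one of its roots, which lies in `K̃`.
-/

open Polynomial

theorem algOver_iff_isAlgebraic {Ω : Type*} [Field Ω] {M : Subfield Ω} {z : Ω} :
    AlgOver M z ↔ IsAlgebraic M z := by
  constructor
  · rintro ⟨f, hf0, hfM, hfz⟩
    obtain ⟨q, rfl⟩ : ∃ q : M[X], q.map (algebraMap M Ω) = f :=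
      (mem_lifts f).1 ((lifts_iff_coeff_lifts f).2 fun i => ⟨⟨_, hfM i⟩, rfl⟩)
    exact ⟨q, fun h => hf0 (by simp [h]), by rwa [aeval_def, ← eval_map]⟩
  · rintro ⟨q, hq0, hqz⟩
    refine ⟨q.map (algebraMap M Ω), Polynomial.map_ne_zero hq0, fun i => ?_, ?_⟩
    · rw [coeff_map]
      exact (q.coeff i).2
    · rwa [eval_map, ← aeval_def]

namespace Valuation

variable {R Γ : Type*} [Ring R] [LinearOrderedCommGroupWithZero Γ] (v : Valuation R Γ)

theorem exists_ne_map_eq_of_sum_eq_zero {ι : Type*} {s : Finset ι} {t : ι → R}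
    (hsum : ∑ i ∈ s, t i = 0) {i₀ : ι} (hi₀ : i₀ ∈ s) (hti₀ : v (t i₀) ≠ 0) :
    ∃ i ∈ s, ∃ j ∈ s, i ≠ j ∧ v (t i) ≠ 0 ∧ v (t i) = v (t j) := by
  classical
  obtain ⟨i, his, hmax⟩ := s.exists_max_image (fun i => v (t i)) ⟨i₀, hi₀⟩
  have hi : v (t i) ≠ 0 := ((zero_lt_iff.2 hti₀).trans_le (hmax i₀ hi₀)).ne'
  by_contra! hne
  have hrest : v (∑ j ∈ s.erase i, t j) < v (t i) := v.map_sum_lt hi fun j hj =>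
    (hmax j (Finset.mem_of_mem_erase hj)).lt_of_ne
      (hne i his j (Finset.mem_of_mem_erase hj) (Finset.ne_of_mem_erase hj).symm hi).symm
  have htotal := v.map_add_eq_of_lt_left hrest
  rw [Finset.add_sum_erase s t his, hsum, map_zero] at htotal
  exact hi htotal.symm

end Valuation

namespace Polynomial

variable {R Γ : Type*} [DivisionRing R] [LinearOrderedCommGroupWithZero Γ] (v : Valuation R Γ)

theorem exists_max_map_coeff {f : R[X]} (hf : f ≠ 0) :
    ∃ j, (∀ i, v (f.coeff i) ≤ v (f.coeff j)) ∧ ∀ i, j < i → v (f.coeff i) < v (f.coeff j) := by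
  obtain ⟨j, -, hmax⟩ := (Finset.range (f.natDegree + 1)).exists_max_image
    (fun i => toLex (v (f.coeff i), i)) ⟨0, by simp⟩
  have hle : ∀ i ≤ f.natDegree,
      v (f.coeff i) ≤ v (f.coeff j) ∧ (v (f.coeff i) = v (f.coeff j) → i ≤ j) := by
    intro i hi
    have := hmax i (by simpa [Nat.lt_succ_iff])
    rw [Prod.Lex.toLex_le_toLex] at this
    rcases this with h | ⟨h, h'⟩
    · exact ⟨h.le, fun h' => (h.ne h').elim⟩
    · exact ⟨h.le, fun _ => h'⟩
  have hpos : 0 < v (f.coeff j) :=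
    (v.pos_iff.2 (leadingCoeff_ne_zero.2 hf)).trans_le (hle _ le_rfl).1
  refine ⟨j, fun i => ?_, fun i hi => ?_⟩ <;> rcases le_or_gt i f.natDegree with h | h
  · exact (hle i h).1
  · rw [coeff_eq_zero_of_natDegree_lt h, map_zero]; exact hpos.le
  · exact (hle i h).1.lt_of_ne fun heq => hi.not_ge ((hle i h).2 heq)
  · rw [coeff_eq_zero_of_natDegree_lt h, map_zero]; exact hpos

end Polynomial

section

variable {Ω Γ : Type*} [Field Ω] [LinearOrderedCommGroupWithZero Γ] (w : Valuation Ω Γ)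

theorem exists_pow_map_eq_of_algOver {M : Subfield Ω} {x : Ω} (hx : x ≠ 0) (hxM : AlgOver M x) :
    ∃ n : ℕ, 0 < n ∧ ∃ z ∈ M, w x ^ n = w z := by
  obtain ⟨f, hf0, hfM, hfx⟩ := hxM
  rw [eval_eq_sum_range] at hfx
  have hlead : f.coeff f.natDegree * x ^ f.natDegree ≠ 0 :=
    mul_ne_zero (leadingCoeff_ne_zero.2 hf0) (pow_ne_zero _ hx)
  obtain ⟨i, -, j, -, hij, hi0, hij_eq⟩ :=
    w.exists_ne_map_eq_of_sum_eq_zero hfx (Finset.self_mem_range_succ _) (w.ne_zero_iff.2 hlead)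
  wlog hlt : i < j generalizing i j
  · exact this j i hij.symm (hij_eq ▸ hi0) hij_eq.symm (hij.lt_or_gt.resolve_left hlt)
  refine ⟨j - i, by omega, f.coeff i / f.coeff j, div_mem (hfM i) (hfM j), ?_⟩
  simp only [map_mul, map_pow] at hi0 hij_eq
  have hcj : w (f.coeff j) ≠ 0 := left_ne_zero_of_mul (hij_eq ▸ hi0)
  rw [map_div₀, eq_div_iff hcj]
  apply mul_right_cancel₀ (right_ne_zero_of_mul hi0)
  rw [hij_eq, mul_right_comm, ← pow_add, Nat.sub_add_cancel hlt.le, mul_comm]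

theorem exists_algOver_map_eq_of_pow_eq [IsAlgClosed Ω] {K : Subfield Ω} {x y : Ω} {n : ℕ}
    (hn : 0 < n) (hy : y ∈ K) (h : w x ^ n = w y) : ∃ u, AlgOver K u ∧ w u = w x := by
  obtain ⟨u, rfl⟩ := IsAlgClosed.exists_pow_nat_eq y hn
  refine ⟨u, algOver_iff_isAlgebraic.2 (IsIntegral.of_pow hn ?_).isAlgebraic, ?_⟩
  · exact isIntegral_algebraMap (x := (⟨u ^ n, hy⟩ : K))
  · exact (pow_left_inj₀ zero_le zero_le hn.ne').1 (by rw [← map_pow, h])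

theorem exists_algOver_map_eq [IsAlgClosed Ω] {K F : Subfield Ω}
    (htors : ∀ x ∈ F, x ≠ 0 → ∃ n : ℕ, 0 < n ∧ ∃ y ∈ K, y ≠ 0 ∧ w x ^ n = w y)
    {x : Ω} (hx : x ≠ 0) (hxF : AlgOver F x) : ∃ y, AlgOver K y ∧ w y = w x := by
  obtain ⟨n, hn, z, hzF, hz⟩ := exists_pow_map_eq_of_algOver w hx hxF
  have hz0 : z ≠ 0 := by
    rintro rfl
    exact pow_ne_zero n (w.ne_zero_iff.2 hx) (by rw [hz, map_zero])
  obtain ⟨m, hm, y, hyK, -, hzy⟩ := htors z hzF hz0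
  exact exists_algOver_map_eq_of_pow_eq w (Nat.mul_pos hn hm) hyK (by rw [pow_mul, hz, hzy])

theorem exists_isRoot_map_sub_lt_one [IsAlgClosed Ω] {Q : Polynomial Ω} (hQ : Q.Monic) {x : Ω}
    (h : w (Q.eval x) < 1) : ∃ a, Q.IsRoot a ∧ w (x - a) < 1 := by
  by_contra! hall
  refine h.not_ge ?_
  rw [(IsAlgClosed.splits Q).eval_eq_prod_roots_of_monic hQ, map_multiset_prod, Multiset.map_map]
  exact Multiset.one_le_prod_of_one_le fun g hg => by
    obtain ⟨a, ha, rfl⟩ := Multiset.mem_map.1 hg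
    exact hall a (isRoot_of_mem_roots ha)

theorem exists_monic_map_eval_lt_one_of_algOver {M : Subfield Ω} {x : Ω} (hx : w x ≤ 1)
    (hxM : AlgOver M x) :
    ∃ p : Polynomial Ω, p.Monic ∧ (∀ i, p.coeff i ∈ M ∧ w (p.coeff i) ≤ 1) ∧
      w (p.eval x) < 1 := by
  obtain ⟨f, hf0, hfM, hfx⟩ := hxM
  obtain ⟨j, hmax, hlt⟩ := exists_max_map_coeff w hf0
  set c := f.coeff j
  have hpos : 0 < w c := zero_le.trans_lt (hlt _ (Nat.lt_succ_self j))
  have hc0 : c ≠ 0 := w.pos_iff.1 hpos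
  let p := ∑ i ∈ Finset.range (j + 1), C (f.coeff i / c) * X ^ i
  have hcoeff : ∀ i, p.coeff i = if i ≤ j then f.coeff i / c else 0 := by
    intro i
    simp [p]
  refine ⟨p, monic_of_natDegree_le_of_coeff_eq_one j ?_ ?_, fun i => ?_, ?_⟩
  · exact natDegree_le_iff_coeff_eq_zero.2 fun i hi => by
      rw [hcoeff, if_neg (by exact_mod_cast hi.not_ge)]
  · rw [hcoeff, if_pos le_rfl, div_self hc0]
  · rw [hcoeff]
    split_ifs
    · exact ⟨div_mem (hfM i) (hfM j), by rw [map_div₀]; exact (div_le_one₀ hpos).2 (hmax i)⟩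
    · exact ⟨zero_mem M, by rw [map_zero]; exact zero_le⟩
  have hj : j ≤ f.natDegree := le_natDegree_of_ne_zero hc0
  have hhead :
      p.eval x * c = -∑ i ∈ Finset.Ico (j + 1) (f.natDegree + 1), f.coeff i * x ^ i := by
    rw [eval_eq_sum_range, ← Finset.sum_range_add_sum_Ico _ (Nat.succ_le_succ hj)] at hfx
    simp only [p, eval_finsetSum, eval_mul, eval_C, eval_pow, eval_X, Finset.sum_mul]
    rw [← eq_neg_of_add_eq_zero_left hfx]
    exact Finset.sum_congr rfl fun i _ => by rw [mul_right_comm, div_mul_cancel₀ _ hc0]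
  have htail : w (∑ i ∈ Finset.Ico (j + 1) (f.natDegree + 1), f.coeff i * x ^ i) < w c :=
    w.map_sum_lt hpos.ne' fun i hi => by
      rw [map_mul, map_pow]
      exact (mul_le_of_le_one_right zero_le (pow_le_one₀ zero_le hx)).trans_lt
        (hlt i (Finset.mem_Ico.1 hi).1)
  rw [← w.map_neg, ← hhead, map_mul] at htail
  exact lt_of_mul_lt_mul_right (by rwa [one_mul]) zero_le

theorem exists_algOver_map_sub_lt_one_of_monic [IsAlgClosed Ω] {K : Subfield Ω} {c : Ω}
    (hc : w c = 1 → ∃ f : Polynomial Ω, f.Monic ∧ (∀ i, f.coeff i ∈ K) ∧ w (f.eval c) < 1)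
    (hc1 : w c ≤ 1) : ∃ a, AlgOver K a ∧ w (c - a) < 1 := by
  rcases hc1.lt_or_eq with hlt | heq
  · exact ⟨0, algOver_iff_isAlgebraic.2 isAlgebraic_zero, by rwa [sub_zero]⟩
  · obtain ⟨f, hfm, hfK, hfc⟩ := hc heq
    obtain ⟨a, ha, hca⟩ := exists_isRoot_map_sub_lt_one w hfm hfc
    exact ⟨a, ⟨f, hfm.ne_zero, hfK, ha⟩, hca⟩

theorem exists_algOver_map_sub_lt_one [IsAlgClosed Ω] {K F : Subfield Ω}
    (happrox : ∀ c ∈ F, w c ≤ 1 → ∃ a, AlgOver K a ∧ w (c - a) < 1)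
    {x : Ω} (hx : w x ≤ 1) (hxF : AlgOver F x) : ∃ y, AlgOver K y ∧ w (x - y) < 1 := by
  obtain ⟨p, hpm, hpF, hpx⟩ := exists_monic_map_eval_lt_one_of_algOver w hx hxF
  choose a haK hpa using fun i => happrox (p.coeff i) (hpF i).1 (hpF i).2
  let L := algebraicClosure K Ω
  set n := p.natDegree
  have haL : ∀ i, a i ∈ L := fun i =>
    mem_algebraicClosure_iff.2 (algOver_iff_isAlgebraic.1 (haK i))
  let q : Polynomial L := X ^ n + ∑ i : Fin n, C ⟨a i, haL i⟩ * X ^ (i : ℕ)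
  have hqm : q.Monic := monic_X_pow_add (degree_sum_fin_lt _)
  have hpx_eq : p.eval x = x ^ n + ∑ i ∈ Finset.range n, p.coeff i * x ^ i := by
    rw [eval_eq_sum_range, Finset.sum_range_succ, hpm.coeff_natDegree, one_mul, add_comm]
  have hqx : (q.map (algebraMap L Ω)).eval x =
      p.eval x + ∑ i ∈ Finset.range n, (a i - p.coeff i) * x ^ i := by
    simp [q, hpx_eq, Fin.sum_univ_eq_sum_range (fun i => a i * x ^ i), sub_mul]
  have hdiff : w (∑ i ∈ Finset.range n, (a i - p.coeff i) * x ^ i) < 1 :=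
    w.map_sum_lt one_ne_zero fun i _ => by
      rw [map_mul, map_pow, ← w.map_neg, neg_sub]
      exact (mul_le_of_le_one_right zero_le (pow_le_one₀ zero_le hx)).trans_lt (hpa i)
  obtain ⟨b, hb, hxb⟩ :=
    exists_isRoot_map_sub_lt_one w (hqm.map _) (hqx ▸ w.map_add_lt hpx hdiff)
  have hbL : IsAlgebraic L b := ⟨q, hqm.ne_zero, by rwa [aeval_def, ← eval_map]⟩
  exact ⟨b, algOver_iff_isAlgebraic.2 (hbL.restrictScalars K), hxb⟩

end

theorem stmt18_general {Ω Γ : Type*} [Field Ω] [IsAlgClosed Ω] [LinearOrderedCommGroupWithZero Γ]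
    (w : Valuation Ω Γ) (K F : Subfield Ω)
    (halgΩ : ∀ z : Ω, AlgOver F z)  -- Ω is the algebraic closure of F
    (htors : ∀ x ∈ F, x ≠ 0 → ∃ n : ℕ, 0 < n ∧ ∃ y ∈ K, y ≠ 0 ∧ w x ^ n = w y)
    (hresalg : ∀ x ∈ F, w x = 1 → ∃ f : Polynomial Ω,
      f.Monic ∧ 0 < f.natDegree ∧ (∀ i, f.coeff i ∈ K ∧ w (f.coeff i) ≤ 1) ∧
      w (Polynomial.eval x f) < 1) :
    IsImmediateExt w (Subfield.closure {z : Ω | AlgOver K z})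
      (F ⊔ Subfield.closure {z : Ω | AlgOver K z}) := by
  refine ⟨fun x _ hx0 => ?_, fun x _ hx1 => ?_⟩
  · obtain ⟨y, hy, hwy⟩ := exists_algOver_map_eq w htors hx0 (halgΩ x)
    exact ⟨y, Subfield.subset_closure hy, hwy⟩
  · have happrox : ∀ c ∈ F, w c ≤ 1 → ∃ a, AlgOver K a ∧ w (c - a) < 1 := fun c hc =>
      exists_algOver_map_sub_lt_one_of_monic w fun hc1 =>
        (hresalg c hc hc1).imp fun f hf => ⟨hf.1, fun i => (hf.2.2.1 i).1, hf.2.2.2⟩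
    obtain ⟨y, hy, hlt⟩ := exists_algOver_map_sub_lt_one w happrox hx1.le (halgΩ x)
    exact ⟨y, Subfield.subset_closure hy, hlt⟩

/-- Let (F|K,v) be a valued function field such that vF/vK is a torsion
group and Fv|Kv is algebraic, with v extended to the algebraic closure Ω of F.
Then (F.K̃ | K̃, v) is an immediate extension, where K̃ is the algebraic closure of K
inside Ω: v(F.K̃) = vK̃ and (F.K̃)v = K̃v.
  (vF/vK torsion: every value of F has a positive power which is a value of K;
  Fv|Kv algebraic: every residue of F is a root of a monic polynomial whose
  coefficients are residues of elements of K, expressed via a monic lift with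
  coefficients in K ∩ O and positive degree.) -/
theorem stmt18 {Ω Γ : Type*} [Field Ω] [IsAlgClosed Ω] [LinearOrderedCommGroupWithZero Γ]
    (w : Valuation Ω Γ) (K F : Subfield Ω) (hKF : K ≤ F)
    (halgΩ : ∀ z : Ω, AlgOver F z)  -- Ω is the algebraic closure of F
    (hfg : ∃ s : Finset Ω, F = Subfield.closure ((K : Set Ω) ∪ ↑s))
    (htors : ∀ x ∈ F, x ≠ 0 → ∃ n : ℕ, 0 < n ∧ ∃ y ∈ K, y ≠ 0 ∧ w x ^ n = w y)
    (hresalg : ∀ x ∈ F, w x = 1 → ∃ f : Polynomial Ω,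
      f.Monic ∧ 0 < f.natDegree ∧ (∀ i, f.coeff i ∈ K ∧ w (f.coeff i) ≤ 1) ∧
      w (Polynomial.eval x f) < 1) :
    IsImmediateExt w (Subfield.closure {z : Ω | AlgOver K z})
      (F ⊔ Subfield.closure {z : Ω | AlgOver K z}) :=
  stmt18_general w K F halgΩ htors hresalg
end

section
/- Let (F|K,v) be a valued function field of arbitrary transcendence degree and K'|K an algebraic extension (inside a fixed valued algebraic closure of F) such that (F.K'|K',v) is henselian rational, i.e., F.K' ⊆ K'(T)^h for some transcendence basis T ⊆ F.K' of F.K'|K'. Then there exists a finite subextension L|K of K'|K such that (F.L|L,v) is henselian rational. -/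
/-- (M|B,w) is henselian rational: there is a transcendence basis T ⊆ M of M over B
(algebraically independent over B; it is automatically spanning) such that M lies in
the henselization of the rational function field B(T). -/
def HenselianRational {Ω Γ : Type*} [Field Ω] [LinearOrderedCommGroupWithZero Γ]
    (w : Valuation Ω Γ) (B M : Subfield Ω) : Prop :=
  ∃ T : Set Ω, T ⊆ (M : Set Ω) ∧ AlgIndepOver B T ∧
    M ≤ henselization w (Subfield.closure ((B : Set Ω) ∪ T))

/-- An extension of subfields A ≤ B is finite if B is a finite A-module. -/
def Subfield.FiniteExt {Ω : Type*} [Field Ω] (A B : Subfield Ω) : Prop :=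
  ∃ h : A ≤ B, (Subfield.inclusion h).Finite

/-!
Write `K'` as the directed union of the finite extensions `K(t)`, `t ⊆ K'` finite, and let
`H t` be the henselization of `K(t)(T ∩ F.K(t))`. A directed union of henselian fields is
henselian, so `⋃ H t` contains the henselization of `K'(T)` and hence `F`. As `F` is finitely
generated over `K`, it already lies in a single `H t`, and then `T ∩ F.K(t)` witnesses that
`F.K(t) | K(t)` is henselian rational.

That henselizations are henselian uses that `Ω` is algebraically closed: the valuation ring of
`w` is then henselian, and since Hensel roots are unique, the root found there lies in every
henselian subfield containing the coefficients.
-/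

open Polynomial IsLocalRing

theorem IsLocalRing.isUnit_of_sub_mem_maximalIdeal {R : Type*} [CommRing R] [IsLocalRing R]
    {x y : R} (hx : IsUnit x) (h : y - x ∈ maximalIdeal R) : IsUnit y :=
  notMem_maximalIdeal.1 fun hy ↦ notMem_maximalIdeal.2 hx (sub_sub_cancel y x ▸ sub_mem hy h)

theorem Polynomial.eq_of_isRoot_of_sub_mem_maximalIdeal {R : Type*} [CommRing R] [IsLocalRing R]
    [IsDomain R] {p : R[X]} {a₀ a b : R} (hu : IsUnit (p.derivative.eval a₀))
    (ha : p.IsRoot a) (hb : p.IsRoot b) (ha₀ : a - a₀ ∈ maximalIdeal R)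
    (hb₀ : b - a₀ ∈ maximalIdeal R) : a = b := by
  obtain ⟨k, hk⟩ := p.binomExpansion a (b - a)
  have hua : IsUnit (p.derivative.eval a) := by
    obtain ⟨c, hc⟩ := sub_dvd_eval_sub a a₀ p.derivative
    exact isUnit_of_sub_mem_maximalIdeal hu (hc ▸ Ideal.mul_mem_right _ _ ha₀)
  have hba : b - a ∈ maximalIdeal R := sub_sub_sub_cancel_right b a a₀ ▸ sub_mem hb₀ ha₀
  have hunit : IsUnit (p.derivative.eval a + k * (b - a)) :=
    isUnit_of_sub_mem_maximalIdeal hua (by simpa using Ideal.mul_mem_left _ k hba)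
  rw [add_sub_cancel, hb.eq_zero, ha.eq_zero, zero_add, pow_two, ← mul_assoc, ← add_mul,
    eq_comm, hunit.mul_right_eq_zero, sub_eq_zero] at hk
  exact hk.symm

theorem HenselianLocalRing.iff_of_injective {R S : Type*} [CommRing R] [IsLocalRing R]
    [CommRing S] [IsLocalRing S] (φ : R →+* S) (hφ : Function.Injective φ)
    (hm : ∀ x, φ x ∈ maximalIdeal S ↔ x ∈ maximalIdeal R) :
    HenselianLocalRing R ↔ ∀ p : S[X], p.Monic → p ∈ lifts φ → ∀ a₀ ∈ φ.range,
      p.eval a₀ ∈ maximalIdeal S → IsUnit (p.derivative.eval a₀) →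
      ∃ a ∈ φ.range, p.IsRoot a ∧ a - a₀ ∈ maximalIdeal S := by
  have hunit (x : R) : IsUnit (φ x) ↔ IsUnit x := by
    rw [← notMem_maximalIdeal, ← notMem_maximalIdeal, hm]
  have heval (q : R[X]) (x : R) : (q.map φ).eval (φ x) = φ (q.eval x) := by
    rw [eval_map, eval₂_hom]
  constructor
  · rintro hR p hmon hlift _ ⟨b₀, rfl⟩ hev hder
    obtain ⟨q, rfl, -, hqmon⟩ := lifts_and_natDegree_eq_and_monic hlift hmon
    rw [heval, hm] at hev
    rw [derivative_map, heval, hunit] at hder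
    obtain ⟨b, hb, hbb₀⟩ := hR.is_henselian q hqmon b₀ hev hder
    refine ⟨φ b, ⟨b, rfl⟩, ?_, ?_⟩
    · rw [IsRoot, heval, hb.eq_zero, map_zero]
    · rwa [← map_sub, hm]
  · refine fun h ↦ ⟨fun q hqmon b₀ hev hder ↦ ?_⟩
    obtain ⟨_, ⟨b, rfl⟩, hb, hbb₀⟩ := h (q.map φ) (hqmon.map φ) ((mem_lifts _).2 ⟨q, rfl⟩)
      (φ b₀) ⟨b₀, rfl⟩ (by rwa [heval, hm]) (by rwa [derivative_map, heval, hunit])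
    refine ⟨b, hφ ?_, by rwa [← map_sub, hm] at hbb₀⟩
    rw [IsRoot, heval] at hb
    rw [hb, map_zero]

theorem ValuationSubring.henselianLocalRing_of_isAlgClosed {Ω : Type*} [Field Ω]
    [IsAlgClosed Ω] (A : ValuationSubring Ω) : HenselianLocalRing A := by
  refine ⟨fun p hmon a₀ hev _ ↦ ?_⟩
  set roots := (p.map (algebraMap A Ω)).roots
  have hprod : A.valuation ((p.eval a₀ : A) : Ω) =
      (roots.map fun r ↦ A.valuation (a₀ - r)).prod := by
    rw [← A.algebraMap_apply, ← eval₂_hom, ← eval_map,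
      (IsAlgClosed.splits _).eq_prod_roots_of_monic (hmon.map _)]
    simp [eval_multiset_prod, map_multiset_prod, roots]
  rw [valuation_lt_one_iff, hprod] at hev
  obtain ⟨r, hr, hlt⟩ : ∃ r ∈ roots, A.valuation (a₀ - r) < 1 := by
    by_contra! h
    exact hev.not_ge (Multiset.one_le_prod_of_one_le (by simpa using h))
  obtain ⟨a, rfl⟩ := (IsIntegrallyClosed.isIntegral_iff (R := A) (x := r)).1
    ⟨p, hmon, by rw [eval₂_eq_eval_map]; exact isRoot_of_mem_roots hr⟩
  refine ⟨a, (isRoot_of_mem_roots hr).of_map (FaithfulSMul.algebraMap_injective A Ω), ?_⟩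
  rwa [← neg_mem_iff, neg_sub, valuation_lt_one_iff]

namespace Subfield

variable {Ω Γ : Type*} [Field Ω] [LinearOrderedCommGroupWithZero Γ] (w : Valuation Ω Γ)

theorem exists_finset_subset_of_directed {ι : Type*} [Nonempty ι] {S : ι → Subfield Ω}
    (hS : Directed (· ≤ ·) S) {s : Finset Ω} (hs : (s : Set Ω) ⊆ (⨆ i, S i : Subfield Ω)) :
    ∃ i, (s : Set Ω) ⊆ S i :=
  (hS.mono_comp _ fun _ _ h ↦ h).exists_mem_subset_of_finset_subset_biUnion
    (hs.trans (coe_iSup_of_directed hS).subset)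

theorem exists_closure_union_le_of_directed {ι : Type*} [Nonempty ι] {S : ι → Subfield Ω}
    (hS : Directed (· ≤ ·) S) {K : Subfield Ω} (hK : ∀ i, K ≤ S i) {s : Finset Ω}
    (hs : closure (K ∪ s) ≤ ⨆ i, S i) : ∃ i, closure (K ∪ s) ≤ S i := by
  obtain ⟨i, hi⟩ := exists_finset_subset_of_directed hS
    (Set.subset_union_right.trans (subset_closure.trans hs))
  exact ⟨i, closure_le.2 (Set.union_subset (hK i) hi)⟩

def valuationSubringHom (M : Subfield Ω) :
    (w.comap M.subtype).valuationSubring →+* w.valuationSubring :=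
  (M.subtype.comp (w.comap M.subtype).valuationSubring.subtype).codRestrict _ fun x ↦ x.2

theorem valuationSubringHom_injective (M : Subfield Ω) :
    Function.Injective (valuationSubringHom w M) :=
  fun _ _ h ↦ Subtype.ext (Subtype.ext (congrArg (fun y : w.valuationSubring ↦ (y : Ω)) h))

theorem mem_range_valuationSubringHom {M : Subfield Ω} {a : w.valuationSubring} :
    a ∈ (valuationSubringHom w M).range ↔ (a : Ω) ∈ M :=
  ⟨fun ⟨x, hx⟩ ↦ hx ▸ x.1.2, fun ha ↦ ⟨⟨⟨a, ha⟩, a.2⟩, rfl⟩⟩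

theorem isHenselian_iff (M : Subfield Ω) :
    M.IsHenselian w ↔ ∀ p : w.valuationSubring[X], p.Monic → (∀ c ∈ p.coeffs, (c : Ω) ∈ M) →
      ∀ a₀ : w.valuationSubring, (a₀ : Ω) ∈ M → p.eval a₀ ∈ maximalIdeal w.valuationSubring →
      IsUnit (p.derivative.eval a₀) → ∃ a : w.valuationSubring, (a : Ω) ∈ M ∧ p.IsRoot a ∧
        a - a₀ ∈ maximalIdeal w.valuationSubring := by
  rw [IsHenselian, HenselianLocalRing.iff_of_injective _ (valuationSubringHom_injective w M)
    fun x ↦ by simp only [Valuation.mem_maximalIdeal_iff]; rfl]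
  simp only [lifts_iff_coeffs_subset_range, Set.subset_def, ← RingHom.coe_range,
    SetLike.mem_coe, mem_range_valuationSubringHom]

theorem isHenselian_iSup {ι : Type*} [Nonempty ι] {S : ι → Subfield Ω}
    (hS : Directed (· ≤ ·) S) (h : ∀ i, (S i).IsHenselian w) : (⨆ i, S i).IsHenselian w := by
  classical
  simp only [isHenselian_iff] at h ⊢
  intro p hmon hcoeff a₀ ha₀ hev hder
  obtain ⟨i, hi⟩ := exists_finset_subset_of_directed hS
    (s := insert (a₀ : Ω) (p.coeffs.image (↑))) (by
      rw [Finset.coe_insert, Finset.coe_image]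
      exact Set.insert_subset_iff.2 ⟨ha₀, Set.image_subset_iff.2 hcoeff⟩)
  obtain ⟨a, haS, ha⟩ := h i p hmon (fun c hc ↦ hi (by simp [hc])) a₀ (hi (by simp)) hev hder
  exact ⟨a, le_iSup S i haS, ha⟩

end Subfield

section henselization

variable {Ω Γ : Type*} [Field Ω] [LinearOrderedCommGroupWithZero Γ] (w : Valuation Ω Γ)

theorem le_henselization (N : Subfield Ω) : N ≤ henselization w N :=
  le_sInf fun _ hM ↦ hM.1

theorem henselization_mono : Monotone (henselization w) :=
  fun _ _ h ↦ sInf_le_sInf fun _ hM ↦ ⟨h.trans hM.1, hM.2⟩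

theorem isHenselian_henselization [IsAlgClosed Ω] (N : Subfield Ω) :
    (henselization w N).IsHenselian w := by
  rw [Subfield.isHenselian_iff]
  intro p hmon hcoeff a₀ ha₀ hev hder
  obtain ⟨a, ha, haa₀⟩ :=
    w.valuationSubring.henselianLocalRing_of_isAlgClosed.is_henselian p hmon a₀ hev hder
  refine ⟨a, Subfield.mem_sInf.2 fun M hM ↦ ?_, ha, haa₀⟩
  have hle : henselization w N ≤ M := sInf_le hM
  obtain ⟨b, hbM, hb, hbb₀⟩ := (M.isHenselian_iff w).1 hM.2 p hmon
    (fun c hc ↦ hle (hcoeff c hc)) a₀ (hle ha₀) hev hder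
  rwa [eq_of_isRoot_of_sub_mem_maximalIdeal hder ha hb haa₀ hbb₀]

theorem henselization_iSup_le [IsAlgClosed Ω] {ι : Type*} [Nonempty ι] {S : ι → Subfield Ω}
    (hS : Directed (· ≤ ·) S) : henselization w (⨆ i, S i) ≤ ⨆ i, henselization w (S i) :=
  sInf_le ⟨iSup_mono fun i ↦ le_henselization w (S i),
    Subfield.isHenselian_iSup w (hS.mono_comp (g := henselization w) _ (henselization_mono w))
      fun i ↦ isHenselian_henselization w (S i)⟩

end henselization

section algebraic

variable {Ω : Type*} [Field Ω]

theorem AlgOver.isIntegral {K : Subfield Ω} {x : Ω} (h : AlgOver K x) : IsIntegral K x := by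
  obtain ⟨f, hf0, hfK, hfx⟩ := h
  obtain ⟨p, rfl⟩ := (mem_lifts f).1
    ((lifts_iff_coeff_lifts (f := algebraMap K Ω) f).2 fun n ↦ ⟨⟨_, hfK n⟩, rfl⟩)
  refine IsAlgebraic.isIntegral ⟨p, ?_, by rwa [aeval_def, eval₂_eq_eval_map]⟩
  rintro rfl
  exact hf0 (Polynomial.map_zero _)

theorem AlgIndepOver.mono {B B' : Subfield Ω} {T T' : Set Ω} (h : AlgIndepOver B T)
    (hB : B' ≤ B) (hT : T' ⊆ T) : AlgIndepOver B' T' :=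
  fun n t f ht hinj hf ↦ h n t f (fun i ↦ hT (ht i)) hinj (fun m ↦ hB (hf m))

namespace Subfield

theorem closure_union_eq_adjoin (K : Subfield Ω) (t : Set Ω) :
    closure (K ∪ t) = (IntermediateField.adjoin K t).toSubfield := by
  rw [IntermediateField.adjoin_toSubfield]
  congr
  exact Subtype.range_coe.symm

theorem finiteExt_closure_union {K : Subfield Ω} {t : Set Ω} (ht : t.Finite)
    (h : ∀ x ∈ t, AlgOver K x) : K.FiniteExt (closure (K ∪ t)) := by
  have := ht.to_subtype
  have := IntermediateField.finiteDimensional_adjoin fun x hx ↦ (h x hx).isIntegral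
  rw [K.closure_union_eq_adjoin]
  exact ⟨fun x hx ↦ (IntermediateField.adjoin K t).algebraMap_mem ⟨x, hx⟩, this⟩

theorem iSup_closure_union_finset {K K' : Subfield Ω} (h : K ≤ K') :
    ⨆ t : Finset K', closure (K ∪ Subtype.val '' (t : Set K')) = K' :=
  le_antisymm
    (iSup_le fun _ ↦ closure_le.2 (Set.union_subset h (Set.image_subset_iff.2 fun x _ ↦ x.2)))
    fun x hx ↦ le_iSup (fun t : Finset K' ↦ closure (K ∪ Subtype.val '' (t : Set K'))) {⟨x, hx⟩}
      (subset_closure (Or.inr ⟨⟨x, hx⟩, by simp, rfl⟩))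

end Subfield

end algebraic

section rationalField

variable {Ω Γ : Type*} [Field Ω] [LinearOrderedCommGroupWithZero Γ] (F : Subfield Ω) (T : Set Ω)

open Subfield

def rationalField (B : Subfield Ω) : Subfield Ω :=
  closure (B ∪ (T ∩ (F ⊔ B : Subfield Ω)))

theorem le_rationalField (B : Subfield Ω) : B ≤ rationalField F T B :=
  fun _ hx ↦ subset_closure (Or.inl hx)

theorem rationalField_mono : Monotone (rationalField F T) := fun _ _ h ↦
  closure_mono (Set.union_subset_union h
    (Set.inter_subset_inter_right _ (sup_le_sup_left h F)))

theorem closure_union_le_iSup_rationalField {ι : Type*} [Nonempty ι] {B : ι → Subfield Ω}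
    (hB : Directed (· ≤ ·) B) {K' : Subfield Ω} (hK' : K' ≤ ⨆ i, B i)
    (hT : T ⊆ (F ⊔ K' : Subfield Ω)) : closure (K' ∪ T) ≤ ⨆ i, rationalField F T (B i) := by
  refine closure_le.2 (Set.union_subset
    (hK'.trans (iSup_mono fun i ↦ le_rationalField F T (B i))) fun x hxT ↦ ?_)
  have hx : x ∈ ⨆ i, F ⊔ B i := by
    rw [← sup_iSup]
    exact sup_le_sup_left hK' F (hT hxT)
  obtain ⟨i, hi⟩ := (mem_iSup_of_directed (hB.mono_comp _ fun _ _ h ↦ sup_le_sup_left h F)).1 hx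
  exact le_iSup (fun i ↦ rationalField F T (B i)) i (subset_closure (Or.inr ⟨hxT, hi⟩))

theorem henselianRational_of_le_henselization_rationalField (w : Valuation Ω Γ)
    {B K' : Subfield Ω} (hT : AlgIndepOver K' T) (hB : B ≤ K')
    (hF : F ≤ henselization w (rationalField F T B)) : HenselianRational w B (F ⊔ B) :=
  ⟨T ∩ (F ⊔ B : Subfield Ω), Set.inter_subset_right, hT.mono hB Set.inter_subset_left,
    sup_le hF ((le_rationalField F T B).trans (le_henselization w _))⟩

end rationalField

theorem stmt19_general {Ω Γ : Type*} [Field Ω] [IsAlgClosed Ω] [LinearOrderedCommGroupWithZero Γ]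
    (w : Valuation Ω Γ) (K F K' : Subfield Ω)
    (hfg : ∃ s : Finset Ω, F = Subfield.closure ((K : Set Ω) ∪ ↑s))
    (hKK' : K ≤ K') (halg : ∀ x ∈ K', AlgOver K x)
    (hhr : HenselianRational w K' (F ⊔ K')) :
    ∃ L : Subfield Ω, K ≤ L ∧ L ≤ K' ∧ Subfield.FiniteExt K L ∧
      HenselianRational w L (F ⊔ L) := by
  obtain ⟨T, hTF, hTind, hFK'⟩ := hhr
  obtain ⟨s, hF⟩ := hfg
  let L (t : Finset K') : Subfield Ω := Subfield.closure (K ∪ Subtype.val '' (t : Set K'))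
  let N (t : Finset K') : Subfield Ω := rationalField F T (L t)
  have hL : Monotone L := fun _ _ h ↦ Subfield.closure_mono
    (Set.union_subset_union_right _ (Set.image_mono (Finset.coe_subset.2 h)))
  have hN : Monotone N := fun _ _ h ↦ rationalField_mono F T (hL h)
  have hKL (t) : K ≤ L t := fun _ hx ↦ Subfield.subset_closure (Or.inl hx)
  have hK' : ⨆ t, L t = K' := Subfield.iSup_closure_union_finset hKK'
  have hK'T : Subfield.closure (K' ∪ T) ≤ ⨆ t, N t :=
    closure_union_le_iSup_rationalField F T hL.directed_le hK'.ge hTF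
  have hFH : F ≤ ⨆ t, henselization w (N t) := le_sup_left.trans <| hFK'.trans <|
    (henselization_mono w hK'T).trans (henselization_iSup_le w hN.directed_le)
  obtain ⟨t, ht⟩ := Subfield.exists_closure_union_le_of_directed
    ((henselization_mono w).comp hN).directed_le
    (fun t ↦ ((hKL t).trans (le_rationalField F T _)).trans (le_henselization w _))
    (hF.ge.trans hFH)
  have hLK' : L t ≤ K' := hK' ▸ le_iSup L t
  refine ⟨L t, hKL t, hLK',
    Subfield.finiteExt_closure_union (t.finite_toSet.image _) ?_,
    henselianRational_of_le_henselization_rationalField F T w hTind hLK' (hF.le.trans ht)⟩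
  rintro _ ⟨x, -, rfl⟩
  exact halg x x.2

/-- Let (F|K,v) be a valued function field (inside a fixed valued
algebraic closure Ω of F) and K'|K an algebraic extension such that (F.K'|K',v) is
henselian rational.  Then there exists a finite subextension L|K of K'|K such that
(F.L|L,v) is henselian rational. -/
theorem stmt19 {Ω Γ : Type*} [Field Ω] [IsAlgClosed Ω] [LinearOrderedCommGroupWithZero Γ]
    (w : Valuation Ω Γ) (K F K' : Subfield Ω) (hKF : K ≤ F)
    (hfg : ∃ s : Finset Ω, F = Subfield.closure ((K : Set Ω) ∪ ↑s))
    (hKK' : K ≤ K') (halg : ∀ x ∈ K', AlgOver K x)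
    (hhr : HenselianRational w K' (F ⊔ K')) :
    ∃ L : Subfield Ω, K ≤ L ∧ L ≤ K' ∧ Subfield.FiniteExt K L ∧
      HenselianRational w L (F ⊔ L) :=
  stmt19_general w K F K' hfg hKK' halg hhr
end
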